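/- arXiv:2107.06111 — 8 statements merged into one kernel-verified Lean document; each statement's English description precedes it below -/
import Mathlib

section
/- For all integers t ≥ 3 and γ ≥ 1, the graph H^t_γ has exactly (t−1)γ + 1 vertices, its chromatic number equals t, and for every vertex v the chromatic number of H^t_γ − v equals t − 1 (i.e., H^t_γ is t-critical). -/
/-- Vertex set of the graph `H^t_γ`: the `a`-vertices `a_1, …, a_{γ+1}` (0-indexed),
the `b`-vertices `b_1, …, b_γ` (0-indexed), and the `c`-vertices `c_{ℓ,k}` for
`ℓ ∈ [γ]`, `k ∈ [t-3]` (0-indexed). -/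
abbrev HV (t γ : ℕ) : Type := Fin (γ + 1) ⊕ Fin γ ⊕ (Fin γ × Fin (t - 3))

/-- The edges of the graph `H^t_γ` (as a relation, to be symmetrized):
for each block `ℓ ∈ [γ]` with vertex set `V_ℓ = {a_ℓ, a_{ℓ+1}, b_ℓ, c_{ℓ,1},…,c_{ℓ,t-3}}`,
all pairs inside `V_ℓ` are edges, except that `{a_ℓ, b_ℓ}` is a non-edge when `ℓ ≥ 2`
and `{b_ℓ, a_{ℓ+1}}` is a non-edge when `ℓ ≤ γ - 1`; additionally `{b_ℓ, b_{ℓ+1}}` is an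
edge for `ℓ ∈ [γ-1]`. (Everything is 0-indexed here.) -/
def HRel (t γ : ℕ) : HV t γ → HV t γ → Prop
  | Sum.inl i, Sum.inl j => (j : ℕ) = (i : ℕ) + 1
  | Sum.inr (Sum.inl l), Sum.inl i =>
      ((l : ℕ) = 0 ∧ (i : ℕ) = 0) ∨ ((l : ℕ) + 1 = γ ∧ (i : ℕ) = γ)
  | Sum.inr (Sum.inl l), Sum.inr (Sum.inl l') => (l' : ℕ) = (l : ℕ) + 1
  | Sum.inl i, Sum.inr (Sum.inr (l, _)) => (i : ℕ) = (l : ℕ) ∨ (i : ℕ) = (l : ℕ) + 1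
  | Sum.inr (Sum.inl l), Sum.inr (Sum.inr (l', _)) => l = l'
  | Sum.inr (Sum.inr (l, k)), Sum.inr (Sum.inr (l', k')) => l = l' ∧ k ≠ k'
  | _, _ => False

/-- The graph `H^t_γ`. -/
def Hgraph (t γ : ℕ) : SimpleGraph (HV t γ) := SimpleGraph.fromRel (HRel t γ)

/-!
In a `(t-1)`-colouring of `H^t_γ` each block `{a_ℓ, a_{ℓ+1}} ∪ C_ℓ` is a `(t-1)`-clique, so it
uses every colour, and `b_ℓ`, adjacent to all of `C_ℓ`, repeats the colour of `a_ℓ` or of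
`a_{ℓ+1}`. Since `b_1 ~ a_1` and `b_ℓ ~ b_{ℓ+1}`, induction on `ℓ` forces `b_ℓ` to take the colour
of `a_{ℓ+1}`, which contradicts `b_γ ~ a_{γ+1}`.

After deleting any vertex `v`, the `a`- and `b`-vertices can be coloured alternately with `0, 1`,
the phase flipping at `v` (when `v = c_{ℓ,k}`, `b_ℓ` takes the colour `k + 2` freed by `v`), and
`c_{ℓ,k}` gets colour `k + 2`. Since `χ(G) ≤ χ(G - v) + 1` for every graph, this also gives the
`t`-colouring of `H^t_γ` and the lower bound `χ(H^t_γ - v) ≥ t - 1`.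
-/

namespace SimpleGraph

variable {V : Type*} {G : SimpleGraph V}

theorem Colorable.succ_of_induce_ne {v : V} {n : ℕ} (h : (G.induce {w | w ≠ v}).Colorable n) :
    G.Colorable (n + 1) := by
  classical
  obtain ⟨C⟩ := h
  refine ⟨Coloring.mk (fun w => if hw : w = v then Fin.last n else (C ⟨w, hw⟩).castSucc) ?_⟩
  intro x y hxy
  by_cases hx : x = v <;> by_cases hy : y = v
  · exact absurd (hx.trans hy.symm) hxy.ne
  · simp [hx, hy, (Fin.castSucc_ne_last _).symm]
  · simp [hx, hy, Fin.castSucc_ne_last]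
  · simpa [hx, hy] using C.valid (v := ⟨x, hx⟩) (w := ⟨y, hy⟩) hxy

end SimpleGraph

namespace Hgraph

variable {t γ : ℕ}

lemma card_HV (ht : 3 ≤ t) : Fintype.card (HV t γ) = (t - 1) * γ + 1 := by
  obtain ⟨s, rfl⟩ := Nat.exists_eq_add_of_le' ht
  simp only [HV, Fintype.card_sum, Fintype.card_prod, Fintype.card_fin, Nat.add_sub_cancel]
  rw [show s + 3 - 1 = s + 2 by omega]
  ring

lemma colorable_induce_ne_of_nat {v : HV t γ} {n : ℕ} (f : HV t γ → ℕ) (hlt : ∀ w, f w < n)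
    (hf : ∀ x y, x ≠ v → y ≠ v → HRel t γ x y → f x ≠ f y) :
    ((Hgraph t γ).induce {w | w ≠ v}).Colorable n := by
  refine (SimpleGraph.colorable_iff_exists_bdd_nat_coloring n).2
    ⟨.mk (fun w => f w) ?_, fun w => hlt w⟩
  rintro ⟨x, hx⟩ ⟨y, hy⟩ hxy
  rcases (SimpleGraph.fromRel_adj _ _ _).1 hxy with ⟨-, h | h⟩
  · exact hf x y hx hy h
  · exact (hf y x hy hx h).symm

lemma colorable_induce_ne_a (ht : 3 ≤ t) (i₀ : Fin (γ + 1)) :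
    ((Hgraph t γ).induce {w | w ≠ .inl i₀}).Colorable (t - 1) := by
  refine colorable_induce_ne_of_nat
    (fun | .inl i => if i < i₀ then i % 2 else (i + 1) % 2
         | .inr (.inl l) => (l + 1) % 2
         | .inr (.inr (_, k)) => k + 2) ?_ ?_
  · rintro (i | l | ⟨l, k⟩) <;> dsimp only <;> (try split_ifs) <;> omega
  · rintro (i | l | ⟨l, k⟩) (j | l' | ⟨l', k'⟩) hx hy h <;>
      simp only [HRel, ne_eq, Sum.inl.injEq, Fin.ext_iff, reduceCtorEq, not_false_eq_true]
        at h hx hy ⊢ <;>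
      (try split_ifs) <;> omega

lemma colorable_induce_ne_b (ht : 3 ≤ t) (l₀ : Fin γ) :
    ((Hgraph t γ).induce {w | w ≠ .inr (.inl l₀)}).Colorable (t - 1) := by
  refine colorable_induce_ne_of_nat
    (fun | .inl i => i % 2
         | .inr (.inl l) => if l < l₀ then (l + 1) % 2 else l % 2
         | .inr (.inr (_, k)) => k + 2) ?_ ?_
  · rintro (i | l | ⟨l, k⟩) <;> dsimp only <;> (try split_ifs) <;> omega
  · rintro (i | l | ⟨l, k⟩) (j | l' | ⟨l', k'⟩) hx hy h <;>
      simp only [HRel, ne_eq, Sum.inl.injEq, Sum.inr.injEq, Fin.ext_iff, reduceCtorEq,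
        not_false_eq_true] at h hx hy ⊢ <;>
      (try split_ifs) <;> omega

lemma colorable_induce_ne_c (ht : 3 ≤ t) (l₀ : Fin γ) (k₀ : Fin (t - 3)) :
    ((Hgraph t γ).induce {w | w ≠ .inr (.inr (l₀, k₀))}).Colorable (t - 1) := by
  refine colorable_induce_ne_of_nat
    (fun | .inl i => i % 2
         | .inr (.inl l) => if l < l₀ then (l + 1) % 2 else if l = l₀ then k₀ + 2 else l % 2
         | .inr (.inr (_, k)) => k + 2) ?_ ?_
  · rintro (i | l | ⟨l, k⟩) <;> dsimp only <;> (try split_ifs) <;> omega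
  · rintro (i | l | ⟨l, k⟩) (j | l' | ⟨l', k'⟩) hx hy h <;>
      simp only [HRel, ne_eq, Sum.inr.injEq, Prod.mk.injEq, Fin.ext_iff, reduceCtorEq,
        not_false_eq_true] at h hx hy ⊢ <;>
      (try split_ifs) <;> omega

lemma colorable_induce_ne (ht : 3 ≤ t) (v : HV t γ) :
    ((Hgraph t γ).induce {w | w ≠ v}).Colorable (t - 1) := by
  rcases v with i | l | ⟨l, k⟩
  exacts [colorable_induce_ne_a ht i, colorable_induce_ne_b ht l, colorable_induce_ne_c ht l k]

section Block

variable (l : Fin γ)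

lemma adj_a_castSucc_a_succ : (Hgraph t γ).Adj (.inl l.castSucc) (.inl l.succ) := by
  simp [Hgraph, HRel, Fin.ext_iff]

lemma adj_a_c {i : Fin (γ + 1)} (hi : i = l.castSucc ∨ i = l.succ) (k : Fin (t - 3)) :
    (Hgraph t γ).Adj (.inl i) (.inr (.inr (l, k))) := by
  simp only [Hgraph, SimpleGraph.fromRel_adj, HRel]
  rcases hi with rfl | rfl <;> simp

lemma adj_c_c {k k' : Fin (t - 3)} (h : k ≠ k') :
    (Hgraph t γ).Adj (.inr (.inr (l, k))) (.inr (.inr (l, k'))) := by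
  simp [Hgraph, HRel, h]

lemma adj_b_c (k : Fin (t - 3)) : (Hgraph t γ).Adj (.inr (.inl l)) (.inr (.inr (l, k))) := by
  simp [Hgraph, HRel]

def blockClique : Fin 2 ⊕ Fin (t - 3) → HV t γ :=
  Sum.elim (fun i => .inl (![l.castSucc, l.succ] i)) (fun k => .inr (.inr (l, k)))

lemma pairwise_adj_blockClique :
    Pairwise fun x y => (Hgraph t γ).Adj (blockClique l x) (blockClique l y) := by
  rintro (i | k) (j | k') h <;> simp only [blockClique, Sum.elim_inl, Sum.elim_inr]
  · fin_cases i <;> fin_cases j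
    all_goals first
      | exact absurd rfl h
      | exact adj_a_castSucc_a_succ l
      | exact (adj_a_castSucc_a_succ l).symm
  · fin_cases i
    · exact adj_a_c l (.inl rfl) k'
    · exact adj_a_c l (.inr rfl) k'
  · fin_cases j
    · exact (adj_a_c l (.inl rfl) k).symm
    · exact (adj_a_c l (.inr rfl) k).symm
  · exact adj_c_c l fun e => h (congrArg Sum.inr e)

lemma color_b_eq_or_eq (ht : 3 ≤ t) (C : (Hgraph t γ).Coloring (Fin (t - 1))) :
    C (.inr (.inl l)) = C (.inl l.castSucc) ∨ C (.inr (.inl l)) = C (.inl l.succ) := by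
  have hsurj : Function.Surjective (C ∘ blockClique l) :=
    ((Fintype.bijective_iff_injective_and_card _).2
      ⟨C.injective_comp_of_pairwise_adj _ (pairwise_adj_blockClique l), by simp; omega⟩).surjective
  obtain ⟨i | k, hx⟩ := hsurj (C (.inr (.inl l)))
  · fin_cases i
    · exact .inl hx.symm
    · exact .inr hx.symm
  · exact absurd hx.symm (C.valid (adj_b_c l k))

end Block

section Chain

variable {g : ℕ}

lemma adj_b_castSucc_b_succ (l : Fin g) :
    (Hgraph t (g + 1)).Adj (.inr (.inl l.castSucc)) (.inr (.inl l.succ)) := by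
  simp [Hgraph, HRel, Fin.ext_iff]

lemma adj_b_zero_a_zero : (Hgraph t (g + 1)).Adj (.inr (.inl 0)) (.inl 0) := by
  simp [Hgraph, HRel]

lemma adj_b_last_a_last :
    (Hgraph t (g + 1)).Adj (.inr (.inl (Fin.last g))) (.inl (Fin.last (g + 1))) := by
  simp [Hgraph, HRel]

lemma color_b_eq_color_a_succ (ht : 3 ≤ t) (C : (Hgraph t (g + 1)).Coloring (Fin (t - 1))) :
    ∀ l : Fin (g + 1), C (.inr (.inl l)) = C (.inl l.succ) := by
  refine Fin.induction ?_ fun l ih => ?_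
  · exact (color_b_eq_or_eq 0 ht C).resolve_left (C.valid adj_b_zero_a_zero)
  · refine (color_b_eq_or_eq l.succ ht C).resolve_left fun h => ?_
    rw [← Fin.succ_castSucc, ← ih] at h
    exact C.valid (adj_b_castSucc_b_succ l) h.symm

lemma not_colorable_sub_one (ht : 3 ≤ t) : ¬ (Hgraph t (g + 1)).Colorable (t - 1) :=
  fun ⟨C⟩ => C.valid adj_b_last_a_last (color_b_eq_color_a_succ ht C (Fin.last g))

end Chain

end Hgraph

/-- For all integers `t ≥ 3` and `γ ≥ 1`, the graph `H^t_γ` has exactly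
`(t-1)γ + 1` vertices, its chromatic number equals `t`, and removing any vertex yields a
graph of chromatic number `t - 1` (i.e. `H^t_γ` is `t`-critical). -/
theorem stmt_1 (t γ : ℕ) (ht : 3 ≤ t) (hγ : 1 ≤ γ) :
    Fintype.card (HV t γ) = (t - 1) * γ + 1 ∧
    (Hgraph t γ).chromaticNumber = ((t : ℕ) : ℕ∞) ∧
    ∀ v : HV t γ,
      ((Hgraph t γ).induce {w | w ≠ v}).chromaticNumber = ((t - 1 : ℕ) : ℕ∞) := by
  obtain ⟨g, rfl⟩ : ∃ g, γ = g + 1 := ⟨γ - 1, by omega⟩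
  obtain ⟨n, hn⟩ : ∃ n, t - 1 = n + 1 := ⟨t - 2, by omega⟩
  have hdel : ∀ v, ((Hgraph t (g + 1)).induce {w | w ≠ v}).Colorable (n + 1) :=
    hn ▸ Hgraph.colorable_induce_ne ht
  have hnot : ¬ (Hgraph t (g + 1)).Colorable (n + 1) := hn ▸ Hgraph.not_colorable_sub_one ht
  refine ⟨Hgraph.card_HV ht, ?_, fun v => ?_⟩
  · rw [show (t : ℕ∞) = ((n + 1 : ℕ) : ℕ∞) + 1 by norm_cast; omega,
      SimpleGraph.chromaticNumber_eq_iff_colorable_not_colorable]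
    exact ⟨(hdel (.inl 0)).succ_of_induce_ne, hnot⟩
  · rw [hn, Nat.cast_succ, SimpleGraph.chromaticNumber_eq_iff_colorable_not_colorable]
    exact ⟨hdel v, fun h => hnot h.succ_of_induce_ne⟩
end

section
/- Let r ≥ 1 be an integer and let p be a multiple of 2^r with p ≥ 2^r. Then the number of functions f from {1,…,p} to the set of subsets of {1,…,r} such that, for every j ∈ {0,1,…,r}, exactly binomial(r,j)·p/2^r indices i ∈ {1,…,p} satisfy |f(i)| = j, is at least (2^r)^p · (2^r − 1)! / (2^{2^r} · p^{2^r}), as an inequality of rational numbers. -/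
/-!
A function taking each of the `2^r` subsets exactly `q = p / 2^r` times satisfies the constraint,
since `C(r, j)` subsets have `j` elements; by orbit-stabilizer for the permutations of `Fin p`
there are at least `p! / (q!)^(2^r)` of them. Doubling `2^r` squares this multinomial coefficient
and multiplies it by the central binomial coefficient `C(2N, N) ≥ 4^N / 2N`, so by induction on `r`
we get `p! / (q!)^(2^r) ≥ (2^r)^p · 4p / (4q)^(2^r)`. The bound `2^n n! ≤ 2 n^n`, i.e.
`(1 + 1/n)^n ≥ 2`, turns this into the claimed estimate.
-/

open Finset Nat

section FiberCounting

variable {ι α : Type*} [Fintype ι] [DecidableEq α]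

lemma card_fiber_comp_perm (g : ι → α) (σ : Equiv.Perm ι) (a : α) :
    #{i | g (σ i) = a} = #{i | g i = a} :=
  card_equiv σ (by simp)

lemma exists_card_fiber_eq [Fintype α] {q : ℕ} (h : Fintype.card ι = Fintype.card α * q) :
    ∃ g : ι → α, ∀ a, #{i | g i = a} = q := by
  let e : ι ≃ α × Fin q := Fintype.equivOfCardEq (by simp [h])
  refine ⟨fun i => (e i).1, fun a => ?_⟩
  calc #{i | (e i).1 = a} = #(({a} : Finset α) ×ˢ (univ : Finset (Fin q))) :=
        card_equiv e fun i => by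
          simp only [mem_filter, mem_univ, true_and, mem_product, mem_singleton, and_true]
    _ = q := by simp

lemma factorial_card_le_prod_mul_ncard [DecidableEq ι] [Fintype α] (g : ι → α) :
    (Fintype.card ι)! ≤
      (∏ a, (#{i | g i = a})!) * {f : ι → α | ∀ a, #{i | f i = a} = #{i | g i = a}}.ncard := by
  let G := (Equiv.Perm ι)ᵈᵐᵃ
  have horbit : MulAction.orbit G g ⊆ {f : ι → α | ∀ a, #{i | f i = a} = #{i | g i = a}} := by
    rintro _ ⟨σ, rfl⟩ a
    exact card_fiber_comp_perm g _ a
  have hstab : Nat.card (MulAction.stabilizer G g) = ∏ a, (#{i | g i = a})! := by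
    let e : {σ : Equiv.Perm ι // g ∘ σ = g} ≃ MulAction.stabilizer G g :=
      Equiv.subtypeEquiv DomMulAct.mk fun _ => Iff.rfl
    rw [← Nat.card_congr e, Nat.card_eq_fintype_card, DomMulAct.stabilizer_card]
    simp only [Fintype.card_subtype]
  calc (Fintype.card ι)! = Nat.card G := by
        rw [Nat.card_congr DomMulAct.mk.symm, Nat.card_perm, Nat.card_eq_fintype_card]
    _ = Nat.card (MulAction.stabilizer G g) * (MulAction.stabilizer G g).index :=
        (Subgroup.card_mul_index _).symm
    _ ≤ _ := by
        rw [hstab, MulAction.index_stabilizer]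
        exact Nat.mul_le_mul_left _ (Set.ncard_le_ncard horbit)

lemma card_filter_mem_of_card_fiber_eq {f : ι → α} {q : ℕ} (hf : ∀ a, #{i | f i = a} = q)
    (s : Finset α) : #{i | f i ∈ s} = #s * q := by
  rw [card_eq_sum_card_fiberwise (f := f) (s := {i | f i ∈ s}) (t := s)
    fun i hi => (mem_filter.mp hi).2, ← smul_eq_mul, ← sum_const]
  refine sum_congr rfl fun a ha => ?_
  rw [filter_filter, ← hf a]
  congr 1
  ext i
  simp only [mem_filter, mem_univ, true_and, and_iff_right_iff_imp]
  rintro rfl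
  exact ha

lemma ncard_card_eq_of_card_fiber_eq {β : Type*} [Fintype β] [DecidableEq β] {f : ι → Finset β}
    {q : ℕ} (hf : ∀ s, #{i | f i = s} = q) (j : ℕ) :
    {i | (f i).card = j}.ncard = (Fintype.card β).choose j * q := by
  rw [Set.ncard_eq_toFinset_card', Set.toFinset_ofPred, ← Finset.card_univ, ← card_powersetCard,
    ← card_filter_mem_of_card_fiber_eq hf]
  simp [mem_powersetCard]

end FiberCounting

lemma pow_mul_factorial_pow_le_factorial_mul_pow {q : ℕ} (hq : 0 < q) (r : ℕ) :
    (2 ^ r) ^ (2 ^ r * q) * (4 * (2 ^ r * q)) * q ! ^ 2 ^ r ≤ (2 ^ r * q)! * (4 * q) ^ 2 ^ r := by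
  induction r with
  | zero => simp [mul_comm]
  | succ r ih =>
    set N := 2 ^ r * q with hN
    have hN0 : 0 < N := by positivity
    have hdouble : 2 ^ (r + 1) * q = 2 * N := by rw [hN, pow_succ]; ring
    have hfact : (2 * N)! = N.centralBinom * N ! * N ! := by
      rw [centralBinom, ← choose_mul_factorial_mul_factorial (by omega : N ≤ 2 * N),
        show 2 * N - N = N by omega]
    refine Nat.le_of_mul_le_mul_right ?_ (by omega : 0 < 2 * N)
    calc (2 ^ (r + 1)) ^ (2 ^ (r + 1) * q) * (4 * (2 ^ (r + 1) * q)) * q ! ^ 2 ^ (r + 1) * (2 * N)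
        = 4 ^ N * ((2 ^ r) ^ N * (4 * N) * q ! ^ 2 ^ r) ^ 2 := by
          rw [hdouble, pow_succ 2 r, pow_mul, pow_mul, mul_pow, show (4 : ℕ) = 2 ^ 2 by rfl]
          ring
      _ ≤ (2 * N * N.centralBinom) * (N ! * (4 * q) ^ 2 ^ r) ^ 2 :=
          Nat.mul_le_mul (four_pow_le_two_mul_self_mul_centralBinom N hN0)
            (Nat.pow_le_pow_left ih 2)
      _ = (2 ^ (r + 1) * q)! * (4 * q) ^ 2 ^ (r + 1) * (2 * N) := by
          rw [hdouble, hfact, pow_succ 2 r, pow_mul]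
          ring

lemma two_mul_pow_self_le_succ_pow {n : ℕ} (hn : 0 < n) : 2 * n ^ n ≤ (n + 1) ^ n := by
  have := pow_add_mul_le_add_pow (zero_le n) (by omega : 0 ≤ 2 * n + 1) n
  rwa [mul_one, Nat.cast_id, mul_pow_sub_one hn.ne', ← two_mul] at this

lemma two_pow_mul_factorial_le (n : ℕ) : 2 ^ n * n ! ≤ 2 * n ^ n := by
  induction n with
  | zero => simp
  | succ n ih =>
    rcases n.eq_zero_or_pos with rfl | hn
    · simp
    calc 2 ^ (n + 1) * (n + 1)! = 2 * (n + 1) * (2 ^ n * n !) := by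
          rw [factorial_succ]; ring
      _ ≤ 2 * (n + 1) * (2 * n ^ n) := Nat.mul_le_mul_left _ ih
      _ ≤ 2 * (n + 1) * (n + 1) ^ n := Nat.mul_le_mul_left _ (two_mul_pow_self_le_succ_pow hn)
      _ = 2 * (n + 1) ^ (n + 1) := by ring

lemma pow_mul_factorial_pred_le {m q T : ℕ} (hm : 0 < m) (hq : 0 < q)
    (h : m ^ (m * q) * (4 * (m * q)) ≤ T * (4 * q) ^ m) :
    m ^ (m * q) * (m - 1)! ≤ T * (2 ^ m * (m * q) ^ m) := by
  refine Nat.le_of_mul_le_mul_right ?_ (pow_pos two_pos m)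
  calc m ^ (m * q) * (m - 1)! * 2 ^ m ≤ m ^ (m * q) * (2 ^ m * m !) := by
        rw [mul_assoc, mul_comm _ (2 ^ m)]
        exact Nat.mul_le_mul_left _ (Nat.mul_le_mul_left _ (factorial_le (m.sub_le 1)))
    _ ≤ m ^ (m * q) * (2 * m ^ m) := Nat.mul_le_mul_left _ (two_pow_mul_factorial_le m)
    _ ≤ m ^ (m * q) * (4 * (m * q)) * m ^ m := by
        rw [mul_assoc]
        refine Nat.mul_le_mul_left _ (Nat.mul_le_mul_right _ ?_)
        nlinarith
    _ ≤ T * (4 * q) ^ m * m ^ m := Nat.mul_le_mul_right _ h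
    _ = T * (2 ^ m * (m * q) ^ m) * 2 ^ m := by
        rw [mul_pow, show (4 : ℕ) ^ m = 2 ^ m * 2 ^ m by rw [← mul_pow]; rfl]
        ring

theorem stmt_2_general (r p : ℕ) (hdvd : 2 ^ r ∣ p) (hp : 2 ^ r ≤ p) :
    ((2 ^ r : ℚ) ^ p * (Nat.factorial (2 ^ r - 1) : ℚ)) /
        ((2 : ℚ) ^ (2 ^ r) * (p : ℚ) ^ (2 ^ r)) ≤
      (({f : Fin p → Finset (Fin r) |
          ∀ j ≤ r, {i : Fin p | (f i).card = j}.ncard = r.choose j * p / 2 ^ r}).ncard : ℚ) := by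
  obtain ⟨q, rfl⟩ := hdvd
  have hq : 0 < q := Nat.pos_of_ne_zero (by rintro rfl; simp at hp)
  set S := {f : Fin (2 ^ r * q) → Finset (Fin r) | ∀ j ≤ r,
    {i : Fin (2 ^ r * q) | (f i).card = j}.ncard = r.choose j * (2 ^ r * q) / 2 ^ r}
  obtain ⟨g, hg⟩ := exists_card_fiber_eq (ι := Fin (2 ^ r * q)) (α := Finset (Fin r)) (q := q)
    (by simp)
  have hbalanced : {f | ∀ s, #{i | f i = s} = q} ⊆ S := fun f hf j _ => by
    rw [ncard_card_eq_of_card_fiber_eq hf, Fintype.card_fin,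
      mul_left_comm, Nat.mul_div_cancel_left _ (by positivity)]
  have hcount : (2 ^ r * q)! ≤ q ! ^ 2 ^ r * S.ncard := by
    have := factorial_card_le_prod_mul_ncard g
    simp only [hg, prod_const, Finset.card_univ, Fintype.card_finset, Fintype.card_fin] at this
    exact this.trans (Nat.mul_le_mul_left _ (Set.ncard_le_ncard hbalanced))
  have hlower : (2 ^ r) ^ (2 ^ r * q) * (4 * (2 ^ r * q)) ≤ S.ncard * (4 * q) ^ 2 ^ r := by
    refine Nat.le_of_mul_le_mul_right ?_ (pow_pos (factorial_pos q) (2 ^ r))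
    calc _ ≤ (2 ^ r * q)! * (4 * q) ^ 2 ^ r := pow_mul_factorial_pow_le_factorial_mul_pow hq r
      _ ≤ q ! ^ 2 ^ r * S.ncard * (4 * q) ^ 2 ^ r := Nat.mul_le_mul_right _ hcount
      _ = _ := by ring
  rw [div_le_iff₀ (by positivity)]
  exact_mod_cast pow_mul_factorial_pred_le (Nat.two_pow_pos r) hq hlower

/-- For `r ≥ 1` and `p` a multiple of `2^r` with `p ≥ 2^r`, the number of
functions `f : [p] → 𝒫([r])` such that for every `j ∈ {0,…,r}` exactly `C(r,j)·p/2^r`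
indices `i` satisfy `|f(i)| = j` is at least `(2^r)^p · (2^r - 1)! / (2^{2^r} · p^{2^r})`,
as an inequality of rational numbers. -/
theorem stmt_2 (r p : ℕ) (hr : 1 ≤ r) (hdvd : 2 ^ r ∣ p) (hp : 2 ^ r ≤ p) :
    ((2 ^ r : ℚ) ^ p * (Nat.factorial (2 ^ r - 1) : ℚ)) /
        ((2 : ℚ) ^ (2 ^ r) * (p : ℚ) ^ (2 ^ r)) ≤
      (({f : Fin p → Finset (Fin r) |
          ∀ j ≤ r, {i : Fin p | (f i).card = j}.ncard = r.choose j * p / 2 ^ r}).ncard : ℚ) :=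
  stmt_2_general r p hdvd hp
end

section
/- Let k ≥ 1 be an integer and let n be a multiple of k. For every tuple (c_1,…,c_k) of natural numbers with c_1 + ⋯ + c_k = n, the multinomial coefficient n!/(c_1!·c_2!·⋯·c_k!) is at most the central multinomial coefficient n!/((n/k)!)^k. -/
/-- Smoothing lemma: for a tuple summing to `k*m`, the product of factorials is at least `m!^k`. -/
lemma fact_prod_ge (k m : ℕ) : ∀ d (c : Fin k → ℕ), (∑ i, c i = k * m) →
    (∑ i, (c i - m)) = d → m.factorial ^ k ≤ ∏ i, (c i).factorial := by
  intro d
  induction d using Nat.strong_induction_on with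
  | _ d ih =>
    intro c hsum hd
    by_cases h0 : d = 0
    · -- all c i ≤ m, hence all equal m
      have hle : ∀ i : Fin k, c i ≤ m := by
        intro i
        have : c i - m = 0 := by
          subst h0
          exact (Finset.sum_eq_zero_iff.mp hd) i (Finset.mem_univ i)
        omega
      have heq : ∀ i ∈ (Finset.univ : Finset (Fin k)), c i = m := by
        rw [← Finset.sum_eq_sum_iff_of_le (fun i _ => hle i)]
        simp [hsum, mul_comm]
      have : ∏ i, (c i).factorial = m.factorial ^ k := by
        rw [Finset.prod_congr rfl (fun i hi => by rw [heq i hi] : ∀ i ∈ Finset.univ, (c i).factorial = m.factorial)]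
        simp
      rw [this]
    · -- some c i > m
      have : ∃ i, 0 < c i - m := by
        by_contra h
        push_neg at h
        have : ∑ i, (c i - m) = 0 := Finset.sum_eq_zero (fun i _ => by have := h i; omega)
        omega
      obtain ⟨i, hi⟩ := this
      have hci : m < c i := by omega
      have : ∃ j, c j < m := by
        by_contra h
        push_neg at h
        have : ∑ _j : Fin k, m < ∑ j, c j :=
          Finset.sum_lt_sum (fun j _ => h j) ⟨i, Finset.mem_univ i, hci⟩
        simp [Finset.sum_const, hsum] at this
      obtain ⟨j, hj⟩ := this
      have hij : i ≠ j := by intro h; rw [h] at hci; omega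
      set c' : Fin k → ℕ := Function.update (Function.update c i (c i - 1)) j (c j + 1) with hc'
      have hc'j : c' j = c j + 1 := by simp [hc']
      have hc'i : c' i = c i - 1 := by simp [hc', Function.update_of_ne hij]
      have hc'other : ∀ x, x ≠ i → x ≠ j → c' x = c x := by
        intro x hxi hxj
        simp [hc', Function.update_of_ne hxj, Function.update_of_ne hxi]
      -- decompose sums/products over univ.erase j then erase i
      have hjmem : j ∈ (Finset.univ : Finset (Fin k)) := Finset.mem_univ j
      have himem : i ∈ (Finset.univ : Finset (Fin k)).erase j :=
        Finset.mem_erase.mpr ⟨hij, Finset.mem_univ i⟩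
      set s : Finset (Fin k) := ((Finset.univ : Finset (Fin k)).erase j).erase i with hs
      have hdecomp : ∀ f : Fin k → ℕ, ∑ x, f x = f j + (f i + ∑ x ∈ s, f x) := by
        intro f
        rw [← Finset.add_sum_erase _ f hjmem, ← Finset.add_sum_erase _ f himem]
      have hdecompP : ∀ f : Fin k → ℕ, ∏ x, f x = f j * (f i * ∏ x ∈ s, f x) := by
        intro f
        rw [← Finset.mul_prod_erase _ f hjmem, ← Finset.mul_prod_erase _ f himem]
      have hsame : ∀ x ∈ s, c' x = c x := by
        intro x hx
        simp only [hs, Finset.mem_erase] at hx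
        exact hc'other x hx.1 hx.2.1
      have hsameS : ∑ x ∈ s, c' x = ∑ x ∈ s, c x := Finset.sum_congr rfl hsame
      have hsameM : ∑ x ∈ s, (c' x - m) = ∑ x ∈ s, (c x - m) :=
        Finset.sum_congr rfl (fun x hx => by rw [hsame x hx])
      have e1 : ∑ x, c' x = (c j + 1) + ((c i - 1) + ∑ x ∈ s, c x) := by
        rw [hdecomp c', hc'j, hc'i, hsameS]
      have e2 : ∑ x, c x = c j + (c i + ∑ x ∈ s, c x) := hdecomp c
      have e3 : ∑ x, (c' x - m) = ((c j + 1) - m) + (((c i - 1) - m) + ∑ x ∈ s, (c x - m)) := by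
        rw [hdecomp (fun x => c' x - m)]
        simp only [hc'j, hc'i, hsameM]
      have e4 : ∑ x, (c x - m) = (c j - m) + ((c i - m) + ∑ x ∈ s, (c x - m)) :=
        hdecomp (fun x => c x - m)
      have hsum' : ∑ x, c' x = k * m := by omega
      have hd' : ∑ x, (c' x - m) = d - 1 := by omega
      have hlt : d - 1 < d := by omega
      refine (ih (d - 1) hlt c' hsum' hd').trans ?_
      rw [hdecompP (fun x => (c' x).factorial), hdecompP (fun x => (c x).factorial)]
      have hR : ∏ x ∈ s, (c' x).factorial = ∏ x ∈ s, (c x).factorial :=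
        Finset.prod_congr rfl (fun x hx => by rw [hsame x hx])
      simp only [hR, hc'j, hc'i]
      have h1 : (c j + 1).factorial = (c j + 1) * (c j).factorial := Nat.factorial_succ _
      have h2 : (c i).factorial = c i * (c i - 1).factorial := by
        conv_lhs => rw [show c i = (c i - 1) + 1 by omega]
        rw [Nat.factorial_succ]
        congr 1
        omega
      rw [h1, h2]
      have hle2 : c j + 1 ≤ c i := by omega
      calc (c j + 1) * (c j).factorial * ((c i - 1).factorial * ∏ x ∈ s, (c x).factorial)
          ≤ c i * (c j).factorial * ((c i - 1).factorial * ∏ x ∈ s, (c x).factorial) :=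
            Nat.mul_le_mul_right _ (Nat.mul_le_mul_right _ hle2)
        _ = (c j).factorial * (c i * (c i - 1).factorial * ∏ x ∈ s, (c x).factorial) := by ring

/-- For `k ≥ 1` and `n` a multiple of `k`, every multinomial coefficient
`n!/(c_1!·⋯·c_k!)` with `c_1 + ⋯ + c_k = n` is at most the central multinomial coefficient
`n!/((n/k)!)^k`. -/
theorem stmt_5 (k n : ℕ) (hk : 1 ≤ k) (hdvd : k ∣ n) (c : Fin k → ℕ)
    (hc : ∑ i, c i = n) :
    n.factorial / (∏ i, (c i).factorial) ≤ n.factorial / ((n / k).factorial ^ k) := by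
  obtain ⟨m, rfl⟩ := hdvd
  have hm : k * m / k = m := Nat.mul_div_cancel_left m (by omega)
  rw [hm]
  exact Nat.div_le_div_left (fact_prod_ge k m _ c hc rfl) (pow_pos (Nat.factorial_pos m) k)
end

section
/- Let A be the thick ℓ-arrow gadget for integers r ≥ 2 and 1 ≤ ℓ ≤ r. Let S ⊆ U ∪ {v} be such that v ∉ S or |S ∩ U| ≥ ℓ, let c : U ∖ S → {1,…,r} be injective, and, in case v ∉ S, let c_v ∈ {1,…,r} be arbitrary. Then there exists an r-deletion set Y of A with Y ∩ (U ∪ {v}) = S and |Y ∖ U| = ℓ, together with a proper r-coloring φ of A − Y satisfying φ(u) = c(u) for all u ∈ U ∖ S and, in case v ∉ S, φ(v) = c_v. -/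
/-- Vertex set of the thick `ℓ`-arrow gadget: `U` (a set of `r` true twins), the clique `K`
of size `ℓ`, the clique `K'` of size `r - ℓ`, the independent set `I` of size `ℓ - 1`,
the head vertex `v`, and for each `x ∈ K`, `y ∈ I` a set `D_{x,y}` of `r - 1` vertices. -/
inductive AV (r l : ℕ) : Type where
  | u (i : Fin r)
  | k (i : Fin l)
  | k' (i : Fin (r - l))
  | ind (i : Fin (l - 1))
  | v
  | d (x : Fin l) (y : Fin (l - 1)) (i : Fin (r - 1))

/-- The edges of the thick `ℓ`-arrow gadget (as a relation, to be symmetrized):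
all pairs within `U`, within `K`, within `K'`, between `U` and `K`, between `K` and `K'`,
between `K` and `v`, and for each `x ∈ K`, `y ∈ I` all pairs of distinct vertices within
the clique `{x, y} ∪ D_{x,y}` on `r + 1` vertices. -/
def ARel (r l : ℕ) : AV r l → AV r l → Prop
  | .u _, .u _ => True
  | .u _, .k _ => True
  | .k _, .k _ => True
  | .k _, .k' _ => True
  | .k' _, .k' _ => True
  | .k _, .v => True
  | .k _, .ind _ => True
  | .k x, .d x' _ _ => x = x'
  | .ind y, .d _ y' _ => y = y'
  | .d x y i, .d x' y' i' => x = x' ∧ y = y' ∧ i ≠ i'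
  | _, _ => False

/-- The thick `ℓ`-arrow gadget `A = A_ℓ(U, v)`. -/
def thickArrow (r l : ℕ) : SimpleGraph (AV r l) := SimpleGraph.fromRel (ARel r l)

/-- The `i`-th element of `Fin r` skipping `m`. -/
private def AVskip (r : ℕ) (m : Fin r) (i : Fin (r - 1)) : Fin r :=
  if i.1 < m.1 then ⟨i.1, by have := i.2; omega⟩ else ⟨i.1 + 1, by have := i.2; omega⟩

private lemma AVskip_ne (r : ℕ) (m : Fin r) (i : Fin (r - 1)) : AVskip r m i ≠ m := by
  unfold AVskip
  split <;> · intro h; have := congrArg Fin.val h; simp at this; omega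

private lemma AVskip_inj (r : ℕ) (m : Fin r) {i i' : Fin (r - 1)}
    (h : AVskip r m i = AVskip r m i') : i = i' := by
  apply Fin.ext
  by_cases h1 : i.1 < m.1 <;> by_cases h2 : i'.1 < m.1 <;>
    simp only [AVskip, h1, h2, if_true, if_false, Fin.mk.injEq, if_pos, if_neg,
      not_false_iff] at h <;> omega

private def phi2 {r l : ℕ} (hr : 0 < r) (c : Fin r → Fin r) (cv : Fin r) : AV r l → Fin r
  | .u i => c i
  | .k _ => ⟨0, hr⟩
  | .k' j => ⟨j.1, by have := j.2; omega⟩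
  | .ind _ => ⟨0, hr⟩
  | .v => cv
  | .d _ _ i => ⟨i.1 + 1, by have := i.2; omega⟩

private def phi1 {r l : ℕ} (hr : 0 < r) (c : Fin r → Fin r)
    (g : Fin l → Fin r) (g' : Fin (r - l) → Fin r) : AV r l → Fin r
  | .u i => c i
  | .k j => g j
  | .k' j => g' j
  | .ind _ => ⟨0, hr⟩
  | .v => ⟨0, hr⟩
  | .d x _ i => AVskip r (g x) i

private lemma ncard_range_fin {α : Type*} {n : ℕ} (f : Fin n → α)
    (hf : Function.Injective f) : (Set.range f).ncard = n := by
  rw [← Nat.card_coe_set_eq, Nat.card_range_of_injective hf, Nat.card_eq_fintype_card,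
    Fintype.card_fin]

/-- For the thick `ℓ`-arrow gadget `A` (with `r ≥ 2`, `1 ≤ ℓ ≤ r`):
given `S ⊆ U ∪ {v}` with `v ∉ S` or `|S ∩ U| ≥ ℓ`, an injective coloring prescription
`c` on `U ∖ S` and (in case `v ∉ S`) an arbitrary color `c_v`, there is an `r`-deletion
set `Y` of `A` with `Y ∩ (U ∪ {v}) = S` and `|Y ∖ U| = ℓ`, together with a proper
`r`-coloring `φ` of `A − Y` with `φ(u) = c(u)` on `U ∖ S` and `φ(v) = c_v` if `v ∉ S`. -/
theorem stmt_8 (r l : ℕ) (hr : 2 ≤ r) (hl1 : 1 ≤ l) (hlr : l ≤ r)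
    (S : Set (AV r l))
    (hS : S ⊆ Set.range (fun i : Fin r => (AV.u i : AV r l)) ∪ {AV.v})
    (hSv : (AV.v : AV r l) ∉ S ∨
      l ≤ (S ∩ Set.range (fun i : Fin r => (AV.u i : AV r l))).ncard)
    (c : Fin r → Fin r)
    (hc : ∀ i j : Fin r, (AV.u i : AV r l) ∉ S → (AV.u j : AV r l) ∉ S → c i = c j → i = j)
    (cv : Fin r) :
    ∃ Y : Set (AV r l),
      Y ∩ (Set.range (fun i : Fin r => (AV.u i : AV r l)) ∪ {AV.v}) = S ∧
      (Y \ Set.range (fun i : Fin r => (AV.u i : AV r l))).ncard = l ∧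
      ∃ φ : ((thickArrow r l).induce Yᶜ).Coloring (Fin r),
        (∀ (i : Fin r) (_ : (AV.u i : AV r l) ∉ S) (h : (AV.u i : AV r l) ∈ Yᶜ),
          φ ⟨AV.u i, h⟩ = c i) ∧
        ((AV.v : AV r l) ∉ S → ∀ h : (AV.v : AV r l) ∈ Yᶜ, φ ⟨AV.v, h⟩ = cv) := by
  classical
  have hr0 : 0 < r := by omega
  have hu_inj : Function.Injective (fun i : Fin r => (AV.u i : AV r l)) := by
    intro a b h; simpa using h
  by_cases hv : (AV.v : AV r l) ∈ S
  · -- case v ∈ S : delete S ∪ I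
    have hcard : l ≤ (S ∩ Set.range (fun i : Fin r => (AV.u i : AV r l))).ncard :=
      hSv.resolve_left (fun h => h hv)
    set T : Finset (Fin r) :=
      (Finset.univ.filter (fun i : Fin r => (AV.u i : AV r l) ∉ S)).image c with hT
    have hcT : ∀ i : Fin r, (AV.u i : AV r l) ∉ S → c i ∈ T := fun i hi =>
      Finset.mem_image.mpr ⟨i, by simp [hi], rfl⟩
    have hTcard : T.card ≤ r - l := by
      have h1 : T.card ≤ (Finset.univ.filter (fun i : Fin r => (AV.u i : AV r l) ∉ S)).card :=
        Finset.card_image_le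
      have h2 : (Finset.univ.filter (fun i : Fin r => (AV.u i : AV r l) ∈ S)).card +
          (Finset.univ.filter (fun i : Fin r => (AV.u i : AV r l) ∉ S)).card = r := by
        simpa using
          Finset.card_filter_add_card_filter_not
            (s := (Finset.univ : Finset (Fin r))) (fun i : Fin r => (AV.u i : AV r l) ∈ S)
      have himg : S ∩ Set.range (fun i : Fin r => (AV.u i : AV r l)) =
          (fun i : Fin r => (AV.u i : AV r l)) '' {i | (AV.u i : AV r l) ∈ S} := by
        ext a
        constructor
        · rintro ⟨haS, i, rfl⟩; exact ⟨i, haS, rfl⟩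
        · rintro ⟨i, hi, rfl⟩; exact ⟨hi, i, rfl⟩
      have h3 : (S ∩ Set.range (fun i : Fin r => (AV.u i : AV r l))).ncard =
          (Finset.univ.filter (fun i : Fin r => (AV.u i : AV r l) ∈ S)).card := by
        rw [himg, Set.ncard_image_of_injective _ hu_inj, Set.ncard_eq_toFinset_card',
          Set.toFinset_setOf]
      omega
    have hTc : l ≤ Tᶜ.card := by
      have := Finset.card_compl T
      rw [Fintype.card_fin] at this
      omega
    obtain ⟨t, hts, htcard⟩ := Finset.exists_subset_card_eq hTc
    have ht'card : tᶜ.card = r - l := by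
      rw [Finset.card_compl, htcard, Fintype.card_fin]
    set g : Fin l → Fin r := fun j => (t.orderIsoOfFin htcard j : Fin r) with hgdef
    set g' : Fin (r - l) → Fin r := fun j => (tᶜ.orderIsoOfFin ht'card j : Fin r) with hg'def
    have hg_mem : ∀ j, g j ∈ t := fun j => (t.orderIsoOfFin htcard j).2
    have hg'_mem : ∀ j, g' j ∉ t := fun j =>
      Finset.mem_compl.mp (tᶜ.orderIsoOfFin ht'card j).2
    have hg_inj : Function.Injective g := fun a b h =>
      (t.orderIsoOfFin htcard).injective (Subtype.ext h)
    have hg'_inj : Function.Injective g' := fun a b h =>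
      (tᶜ.orderIsoOfFin ht'card).injective (Subtype.ext h)
    have hg_not_T : ∀ j, g j ∉ T := fun j => Finset.mem_compl.mp (hts (hg_mem j))
    refine ⟨S ∪ Set.range (fun y : Fin (l - 1) => (AV.ind y : AV r l)), ?_, ?_, ?_⟩
    · ext a
      simp only [Set.mem_inter_iff, Set.mem_union, Set.mem_range, Set.mem_singleton_iff]
      constructor
      · rintro ⟨h1 | ⟨y, rfl⟩, h2⟩
        · exact h1
        · rcases h2 with ⟨i, hi⟩ | hveq <;> simp_all
      · intro h
        refine ⟨Or.inl h, ?_⟩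
        rcases hS h with ⟨i, rfl⟩ | hh
        · exact Or.inl ⟨i, rfl⟩
        · exact Or.inr hh
    · have hSU : S \ Set.range (fun i : Fin r => (AV.u i : AV r l)) = {AV.v} := by
        ext a
        simp only [Set.mem_diff, Set.mem_singleton_iff]
        constructor
        · rintro ⟨haS, haU⟩
          rcases hS haS with h | h
          · exact absurd h haU
          · exact h
        · rintro rfl
          exact ⟨hv, by rintro ⟨i, hi⟩; simp at hi⟩
      have heq : (S ∪ Set.range (fun y : Fin (l - 1) => (AV.ind y : AV r l))) \
          Set.range (fun i : Fin r => (AV.u i : AV r l)) =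
          {AV.v} ∪ Set.range (fun y : Fin (l - 1) => (AV.ind y : AV r l)) := by
        rw [Set.union_diff_distrib, hSU]
        congr 1
        ext a
        simp only [Set.mem_diff, Set.mem_range]
        constructor
        · rintro ⟨h, _⟩; exact h
        · rintro ⟨y, rfl⟩
          exact ⟨⟨y, rfl⟩, by rintro ⟨i, hi⟩; simp at hi⟩
      rw [heq, Set.ncard_union_eq (by simp [Set.disjoint_left]) (Set.finite_singleton _)
        (Set.finite_range _), Set.ncard_singleton,
        ncard_range_fin _ (by intro a b h; simpa using h)]
      omega
    · refine ⟨SimpleGraph.Coloring.mk (fun a => phi1 hr0 c g g' a.1) ?_, ?_, ?_⟩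
      · rintro ⟨a, ha⟩ ⟨b, hb⟩ hadj
        simp only [Set.mem_compl_iff, Set.mem_union, Set.mem_range, not_or,
          not_exists] at ha hb
        have hadj' : (thickArrow r l).Adj a b := hadj
        rw [thickArrow, SimpleGraph.fromRel_adj] at hadj'
        obtain ⟨hne, hrel⟩ := hadj'
        cases a <;> cases b <;>
          simp only [ARel, or_self, or_false, false_or, true_or, or_true] at hrel <;>
          simp only [phi1, ne_eq]
        next i _ i' _ =>
          intro h; exact hne (congrArg AV.u (hc i i' ha.1 hb.1 h))
        next i _ j _ =>
          intro h; apply hg_not_T j; rw [← h]; exact hcT i ha.1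
        next j _ i _ =>
          intro h; apply hg_not_T j; rw [h]; exact hcT i hb.1
        next j _ j' _ =>
          intro h; exact hne (congrArg AV.k (hg_inj h))
        next j _ j2 _ =>
          intro h; exact hg'_mem j2 (by rw [← h]; exact hg_mem j)
        next j _ y _ => exact absurd rfl (hb.2 y)
        next j _ _ => exact absurd hv hb.1
        next j _ x' y' i' _ =>
          subst hrel
          exact (AVskip_ne r (g j) i').symm
        next j2 _ j _ =>
          intro h; exact hg'_mem j2 (by rw [h]; exact hg_mem j)
        next j2 _ j2' _ =>
          intro h; exact hne (congrArg AV.k' (hg'_inj h))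
        next y _ j _ => exact absurd rfl (ha.2 y)
        next y _ x' y' i' _ => exact absurd rfl (ha.2 y)
        next _ j _ => exact absurd hv ha.1
        next x y i _ j _ =>
          subst hrel
          exact AVskip_ne r _ i
        next x y i _ y' _ => exact absurd rfl (hb.2 y')
        next x y i _ x' y' i' _ =>
          rcases hrel with ⟨rfl, rfl, hii⟩ | ⟨rfl, rfl, hii⟩
          · intro h; exact hii (AVskip_inj r _ h)
          · intro h; exact hii (AVskip_inj r _ h).symm
      · intro i _ h; rfl
      · intro hv'; exact absurd hv hv'
  · -- case v ∉ S : delete S ∪ K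
    have hSU : S ⊆ Set.range (fun i : Fin r => (AV.u i : AV r l)) := by
      intro a haS
      rcases hS haS with h | h
      · exact h
      · exact absurd (h ▸ haS) hv
    refine ⟨S ∪ Set.range (fun j : Fin l => (AV.k j : AV r l)), ?_, ?_, ?_⟩
    · ext a
      simp only [Set.mem_inter_iff, Set.mem_union, Set.mem_range, Set.mem_singleton_iff]
      constructor
      · rintro ⟨h1 | ⟨j, rfl⟩, h2⟩
        · exact h1
        · rcases h2 with ⟨i, hi⟩ | hveq <;> simp_all
      · intro h
        refine ⟨Or.inl h, ?_⟩
        rcases hS h with ⟨i, rfl⟩ | hh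
        · exact Or.inl ⟨i, rfl⟩
        · exact Or.inr hh
    · have heq : (S ∪ Set.range (fun j : Fin l => (AV.k j : AV r l))) \
          Set.range (fun i : Fin r => (AV.u i : AV r l)) =
          Set.range (fun j : Fin l => (AV.k j : AV r l)) := by
        rw [Set.union_diff_distrib, Set.diff_eq_empty.mpr hSU, Set.empty_union]
        ext a
        simp only [Set.mem_diff, Set.mem_range]
        constructor
        · rintro ⟨h, _⟩; exact h
        · rintro ⟨j, rfl⟩
          exact ⟨⟨j, rfl⟩, by rintro ⟨i, hi⟩; simp at hi⟩
      rw [heq, ncard_range_fin _ (by intro a b h; simpa using h)]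
    · refine ⟨SimpleGraph.Coloring.mk (fun a => phi2 hr0 c cv a.1) ?_, ?_, ?_⟩
      · rintro ⟨a, ha⟩ ⟨b, hb⟩ hadj
        simp only [Set.mem_compl_iff, Set.mem_union, Set.mem_range, not_or,
          not_exists] at ha hb
        have hadj' : (thickArrow r l).Adj a b := hadj
        rw [thickArrow, SimpleGraph.fromRel_adj] at hadj'
        obtain ⟨hne, hrel⟩ := hadj'
        cases a <;> cases b <;>
          simp only [ARel, or_self, or_false, false_or, true_or, or_true] at hrel <;>
          simp only [phi2, ne_eq]
        next i _ i' _ =>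
          intro h; exact hne (congrArg AV.u (hc i i' ha.1 hb.1 h))
        next i _ j _ => exact absurd rfl (hb.2 j)
        next j _ i _ => exact absurd rfl (ha.2 j)
        next j _ j' _ => exact absurd rfl (ha.2 j)
        next j _ j2 _ => exact absurd rfl (ha.2 j)
        next j _ y _ => exact absurd rfl (ha.2 j)
        next j _ _ => exact absurd rfl (ha.2 j)
        next j _ x' y' i' _ => exact absurd rfl (ha.2 j)
        next j2 _ j _ => exact absurd rfl (hb.2 j)
        next j2 _ j2' _ =>
          intro h
          rw [Fin.mk.injEq] at h
          exact hne (congrArg AV.k' (Fin.ext h))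
        next y _ j _ => exact absurd rfl (hb.2 j)
        next y _ x' y' i' _ =>
          intro h
          rw [Fin.mk.injEq] at h
          omega
        next _ j _ => exact absurd rfl (hb.2 j)
        next x y i _ j _ => exact absurd rfl (hb.2 j)
        next x y i _ y' _ =>
          intro h
          rw [Fin.mk.injEq] at h
          omega
        next x y i _ x' y' i' _ =>
          rcases hrel with ⟨rfl, rfl, hii⟩ | ⟨rfl, rfl, hii⟩ <;>
          · intro h
            rw [Fin.mk.injEq] at h
            exact absurd (Fin.ext (by omega)) hii
      · intro i _ h; rfl
      · intro _ h; rfl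
end

section
/- Let B be the color-set gadget for integers r ≥ 2, 1 ≤ m ≤ r, a proper subset C ⊊ {1,…,r} with |C| ≤ m, and ℓ = r − |C|. Then: (i) every r-deletion set Y of B satisfies |Y ∖ (U ∪ F)| ≥ ℓ + 1; (ii) if Y is an r-deletion set of B with Y ∩ F = ∅ and |Y ∖ (U ∪ F)| = ℓ + 1, and φ is a proper r-coloring of B − Y with φ(f_s) = s for all s ∈ {1,…,r}, then v ∈ Y implies φ(u) ∈ C for every u ∈ U ∖ Y. -/
/-
The gadget contains `ℓ + 1` pairwise disjoint cliques on `r + 1` vertices avoiding `U ∪ F`,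
namely `{w_{2ℓ+1}, v} ∪ D_0` and `{w_{2i-1}, w_{2i}} ∪ D_i`; an `r`-deletion set must hit each
of them, which gives (i). In the situation of (ii) it hits each of them exactly once. As `v` is
deleted, `w_{2ℓ+1}` survives and, being complete to `F ∖ {f_1}`, gets colour `1`. Each `w_{2i}`
is complete to `(F ∖ {f_1}) ∪ {w_{2ℓ+1}}`, so it cannot be coloured and is deleted; hence
`w_{2i-1}` survives and, being complete to `F ∖ {f_{c̄_i}}`, gets colour `c̄_i`. Since `w_{2i-1}`
is complete to `U`, no surviving vertex of `U` is coloured outside `C`.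
-/

/-- Vertex set of the color-set gadget: `U` (a set of `m ≤ r` true twins), the head vertex
`v`, vertices `w_1, …, w_{2ℓ+1}` (0-indexed: `w i` is `w_{i+1}`), the central clique
`F = {f_1, …, f_r}` (0-indexed), a set `D_0` of `r - 1` vertices, and for each `i ∈ [ℓ]`
a set `D_i` of `r - 1` vertices. -/
inductive BV (r m l : ℕ) : Type where
  | u (i : Fin m)
  | v
  | w (i : Fin (2 * l + 1))
  | f (s : Fin r)
  | d0 (i : Fin (r - 1))
  | d (i : Fin l) (j : Fin (r - 1))

/-- The edges of the color-set gadget (as a relation, to be symmetrized), where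
`cbar : Fin ℓ → Fin r` enumerates `[r] ∖ C` (so `cbar i` is `c̄_{i+1}`); 0-indexed:
`w_{2i-1}` is `w (2*i0)` and `w_{2i}` is `w (2*i0+1)` for `i0 = i - 1`, and `w_{2ℓ+1}`
is `w (2*l)`; `f_1` is `f s` with `s.val = 0`. -/
def BRel (r m l : ℕ) (cbar : Fin l → Fin r) : BV r m l → BV r m l → Prop
  | .u _, .u _ => True
  | .f _, .f _ => True
  | .w i, .u _ => (i : ℕ) % 2 = 0 ∧ (i : ℕ) < 2 * l
  | .w i, .w j =>
      ((i : ℕ) % 2 = 0 ∧ (i : ℕ) < 2 * l ∧ (j : ℕ) = (i : ℕ) + 1) ∨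
      ((i : ℕ) % 2 = 1 ∧ (j : ℕ) = 2 * l)
  | .w i, .d i0 _ => (i : ℕ) = 2 * (i0 : ℕ) ∨ (i : ℕ) = 2 * (i0 : ℕ) + 1
  | .d i0 j, .d i0' j' => i0 = i0' ∧ j ≠ j'
  | .w i, .f s =>
      (∃ i0 : Fin l, (i : ℕ) = 2 * (i0 : ℕ) ∧ s ≠ cbar i0) ∨
      (((i : ℕ) % 2 = 1 ∨ (i : ℕ) = 2 * l) ∧ (s : ℕ) ≠ 0)
  | .w i, .v => (i : ℕ) = 2 * l
  | .w i, .d0 _ => (i : ℕ) = 2 * l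
  | .v, .d0 _ => True
  | .d0 j, .d0 j' => j ≠ j'
  | _, _ => False

/-- The color-set gadget `B = B_C(U, v)`. -/
def colorSetGadget (r m l : ℕ) (cbar : Fin l → Fin r) : SimpleGraph (BV r m l) :=
  SimpleGraph.fromRel (BRel r m l cbar)

namespace SimpleGraph

variable {V α ι : Type*} {G : SimpleGraph V} {Y : Set V}

theorem Coloring.valid_induce {s : Set V} (φ : (G.induce s).Coloring α) {x y : V} (hx : x ∈ s)
    (hy : y ∈ s) (h : G.Adj x y) : φ ⟨x, hx⟩ ≠ φ ⟨y, hy⟩ :=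
  φ.valid h

theorem Coloring.exists_mem_of_pairwise_adj [Fintype α] [Fintype ι]
    (φ : (G.induce Yᶜ).Coloring α) (hcard : Fintype.card α < Fintype.card ι) {k : ι → V}
    (hk : Pairwise fun i j => G.Adj (k i) (k j)) : ∃ i, k i ∈ Y := by
  by_contra! hY
  have hinj : Function.Injective fun i => φ ⟨k i, hY i⟩ := by
    intro i j hij
    by_contra hne
    exact φ.valid_induce _ _ (hk hne) hij
  exact (Fintype.card_le_of_injective _ hinj).not_gt hcard

theorem Coloring.mem_or_mem_or_exists_mem {r : ℕ} (φ : (G.induce Yᶜ).Coloring (Fin r))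
    {a b : V} {d : Fin (r - 1) → V} (hab : G.Adj a b) (had : ∀ j, G.Adj a (d j))
    (hbd : ∀ j, G.Adj b (d j)) (hd : Pairwise fun i j => G.Adj (d i) (d j)) :
    a ∈ Y ∨ b ∈ Y ∨ ∃ j, d j ∈ Y := by
  let k : Option (Option (Fin (r - 1))) → V
    | none => a
    | some none => b
    | some (some j) => d j
  have hk : Pairwise fun i j => G.Adj (k i) (k j) := by
    rintro (_ | _ | i) (_ | _ | j) hij <;> simp_all [k, G.adj_comm]
    exact hd hij
  have hcard : Fintype.card (Fin r) < Fintype.card (Option (Option (Fin (r - 1)))) := by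
    simp only [Fintype.card_fin, Fintype.card_option]
    omega
  obtain ⟨_ | _ | j, hj⟩ := φ.exists_mem_of_pairwise_adj hcard hk
  exacts [.inl hj, .inr (.inl hj), .inr (.inr ⟨j, hj⟩)]

end SimpleGraph

namespace BV

variable {r m l : ℕ}

def toSum : BV r m l → Fin m ⊕ Unit ⊕ Fin (2 * l + 1) ⊕ Fin r ⊕ Fin (r - 1) ⊕ Fin l × Fin (r - 1)
  | u i => .inl i
  | v => .inr (.inl ())
  | w i => .inr (.inr (.inl i))
  | f s => .inr (.inr (.inr (.inl s)))
  | d0 i => .inr (.inr (.inr (.inr (.inl i))))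
  | d i j => .inr (.inr (.inr (.inr (.inr (i, j)))))

theorem toSum_injective : Function.Injective (toSum : BV r m l → _) := by
  intro x y h
  cases x <;> cases y <;> simp_all [toSum]

instance : Finite (BV r m l) := Finite.of_injective _ toSum_injective

/-- The paper's `w_{2i-1}`, `w_{2i}` and `w_{2ℓ+1}`, for `i = i0 + 1`. -/
def wOdd (i0 : Fin l) : BV r m l := w ⟨2 * i0, by omega⟩

def wEven (i0 : Fin l) : BV r m l := w ⟨2 * i0 + 1, by omega⟩

def wTop : BV r m l := w ⟨2 * l, by omega⟩

/-- Which of the disjoint `(r + 1)`-cliques contains a vertex: `0` for `{w_{2ℓ+1}, v} ∪ D_0`,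
`i0 + 1` for `{wOdd i0, wEven i0} ∪ D_{i0+1}`, and a junk `0` on `U ∪ F`. -/
def blockIndex : BV r m l → ℕ
  | w i => if (i : ℕ) = 2 * l then 0 else i / 2 + 1
  | d i0 _ => i0 + 1
  | _ => 0

@[simp] theorem blockIndex_v : blockIndex (v : BV r m l) = 0 := rfl

@[simp] theorem blockIndex_d0 (j : Fin (r - 1)) : blockIndex (d0 j : BV r m l) = 0 := rfl

@[simp] theorem blockIndex_d (i0 : Fin l) (j : Fin (r - 1)) :
    blockIndex (d i0 j : BV r m l) = i0 + 1 := rfl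

@[simp] theorem blockIndex_wTop : blockIndex (wTop : BV r m l) = 0 := by
  simp [wTop, blockIndex]

@[simp] theorem blockIndex_wOdd (i0 : Fin l) : blockIndex (wOdd i0 : BV r m l) = i0 + 1 := by
  simp only [wOdd, blockIndex]
  split_ifs <;> omega

@[simp] theorem blockIndex_wEven (i0 : Fin l) : blockIndex (wEven i0 : BV r m l) = i0 + 1 := by
  simp only [wEven, blockIndex]
  split_ifs <;> omega

end BV

namespace colorSetGadget

open BV

variable {r m l : ℕ} {cbar : Fin l → Fin r} {Y : Set (BV r m l)}

theorem adj_iff {x y : BV r m l} :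
    (colorSetGadget r m l cbar).Adj x y ↔ x ≠ y ∧ (BRel r m l cbar x y ∨ BRel r m l cbar y x) :=
  SimpleGraph.fromRel_adj _ x y

theorem adj_v_wTop : (colorSetGadget r m l cbar).Adj v wTop := by
  simp [adj_iff, wTop, BRel]

theorem adj_v_d0 (j : Fin (r - 1)) : (colorSetGadget r m l cbar).Adj v (d0 j) := by
  simp [adj_iff, BRel]

theorem adj_wTop_d0 (j : Fin (r - 1)) : (colorSetGadget r m l cbar).Adj wTop (d0 j) := by
  simp [adj_iff, wTop, BRel]

theorem adj_d0_d0 {j j' : Fin (r - 1)} (h : j ≠ j') :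
    (colorSetGadget r m l cbar).Adj (d0 j) (d0 j') := by
  simp [adj_iff, BRel, h]

theorem adj_wOdd_wEven (i0 : Fin l) : (colorSetGadget r m l cbar).Adj (wOdd i0) (wEven i0) := by
  simp [adj_iff, wOdd, wEven, BRel]

theorem adj_wOdd_d (i0 : Fin l) (j : Fin (r - 1)) :
    (colorSetGadget r m l cbar).Adj (wOdd i0) (d i0 j) := by
  simp [adj_iff, wOdd, BRel]

theorem adj_wEven_d (i0 : Fin l) (j : Fin (r - 1)) :
    (colorSetGadget r m l cbar).Adj (wEven i0) (d i0 j) := by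
  simp [adj_iff, wEven, BRel]

theorem adj_d_d (i0 : Fin l) {j j' : Fin (r - 1)} (h : j ≠ j') :
    (colorSetGadget r m l cbar).Adj (d i0 j) (d i0 j') := by
  simp [adj_iff, BRel, h]

theorem adj_wEven_wTop (i0 : Fin l) : (colorSetGadget r m l cbar).Adj (wEven i0) wTop := by
  refine adj_iff.2 ⟨fun h => ?_, .inl (.inr ⟨show (2 * (i0 : ℕ) + 1) % 2 = 1 by omega, rfl⟩)⟩
  simp only [wEven, wTop, w.injEq, Fin.mk.injEq] at h
  omega

theorem adj_wOdd_u (i0 : Fin l) (i : Fin m) : (colorSetGadget r m l cbar).Adj (wOdd i0) (u i) := by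
  simp [adj_iff, wOdd, BRel]

theorem adj_wTop_f {s : Fin r} (hs : (s : ℕ) ≠ 0) :
    (colorSetGadget r m l cbar).Adj wTop (f s) := by
  simp [adj_iff, wTop, BRel, hs]

theorem adj_wEven_f (i0 : Fin l) {s : Fin r} (hs : (s : ℕ) ≠ 0) :
    (colorSetGadget r m l cbar).Adj (wEven i0) (f s) := by
  simp [adj_iff, wEven, BRel, hs]

theorem adj_wOdd_f (i0 : Fin l) {s : Fin r} (hs : s ≠ cbar i0) :
    (colorSetGadget r m l cbar).Adj (wOdd i0) (f s) := by
  simp only [adj_iff, wOdd, BRel, ne_eq, reduceCtorEq, not_false_eq_true, true_and]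
  exact .inl (.inl ⟨i0, rfl, hs⟩)

theorem Iio_subset_image_blockIndex
    (φ : ((colorSetGadget r m l cbar).induce Yᶜ).Coloring (Fin r)) :
    Set.Iio (l + 1) ⊆ blockIndex '' (Y \ (Set.range u ∪ Set.range f)) := by
  rintro (_ | i) hi
  · rcases φ.mem_or_mem_or_exists_mem adj_v_wTop adj_v_d0 adj_wTop_d0
      (fun _ _ h => adj_d0_d0 h) with h | h | ⟨j, h⟩
    exacts [⟨_, ⟨h, by simp⟩, blockIndex_v⟩, ⟨_, ⟨h, by simp [wTop]⟩, blockIndex_wTop⟩,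
      ⟨_, ⟨h, by simp⟩, blockIndex_d0 j⟩]
  · let i0 : Fin l := ⟨i, by simpa using hi⟩
    rcases φ.mem_or_mem_or_exists_mem (adj_wOdd_wEven i0) (adj_wOdd_d i0) (adj_wEven_d i0)
      (fun _ _ h => adj_d_d i0 h) with h | h | ⟨j, h⟩
    exacts [⟨_, ⟨h, by simp [wOdd]⟩, blockIndex_wOdd i0⟩,
      ⟨_, ⟨h, by simp [wEven]⟩, blockIndex_wEven i0⟩, ⟨_, ⟨h, by simp⟩, blockIndex_d i0 j⟩]

theorem succ_le_ncard_image_blockIndex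
    (φ : ((colorSetGadget r m l cbar).induce Yᶜ).Coloring (Fin r)) :
    l + 1 ≤ (blockIndex '' (Y \ (Set.range u ∪ Set.range f))).ncard :=
  calc l + 1 = (Set.Iio (l + 1)).ncard := by simp
    _ ≤ _ := Set.ncard_le_ncard (Iio_subset_image_blockIndex φ)

theorem succ_le_ncard_diff (φ : ((colorSetGadget r m l cbar).induce Yᶜ).Coloring (Fin r)) :
    l + 1 ≤ (Y \ (Set.range u ∪ Set.range f)).ncard :=
  (succ_le_ncard_image_blockIndex φ).trans Set.ncard_image_le

theorem injOn_blockIndex (φ : ((colorSetGadget r m l cbar).induce Yᶜ).Coloring (Fin r))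
    (hY : (Y \ (Set.range u ∪ Set.range f)).ncard = l + 1) :
    Set.InjOn blockIndex (Y \ (Set.range u ∪ Set.range f)) :=
  Set.injOn_of_ncard_image_eq <|
    le_antisymm Set.ncard_image_le (hY ▸ succ_le_ncard_image_blockIndex φ)

theorem color_eq_of_forall_adj_f (φ : ((colorSetGadget r m l cbar).induce Yᶜ).Coloring (Fin r))
    (hF : ∀ s, f s ∉ Y) (hφF : ∀ s (h : f s ∈ Yᶜ), φ ⟨f s, h⟩ = s) {x : BV r m l} (hx : x ∉ Y)
    {c : Fin r} (hadj : ∀ s ≠ c, (colorSetGadget r m l cbar).Adj x (f s)) : φ ⟨x, hx⟩ = c := by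
  by_contra hc
  exact φ.valid_induce _ _ (hadj _ hc) (hφF _ (hF _)).symm

theorem exists_wOdd_not_mem_color_eq
    (φ : ((colorSetGadget r m l cbar).induce Yᶜ).Coloring (Fin r))
    (hF : ∀ s, f s ∉ Y) (hφF : ∀ s (h : f s ∈ Yᶜ), φ ⟨f s, h⟩ = s)
    (hY : (Y \ (Set.range u ∪ Set.range f)).ncard = l + 1) (hv : v ∈ Y) (i0 : Fin l) :
    ∃ h : wOdd i0 ∉ Y, φ ⟨wOdd i0, h⟩ = cbar i0 := by
  have hinj := injOn_blockIndex φ hY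
  have hTop : wTop ∉ Y := fun h => by
    simpa [wTop] using hinj ⟨hv, by simp⟩ ⟨h, by simp [wTop]⟩ (by simp)
  have hr : 0 < r := (φ ⟨_, hTop⟩).pos
  have hφTop : φ ⟨_, hTop⟩ = ⟨0, hr⟩ :=
    color_eq_of_forall_adj_f φ hF hφF hTop fun s hs => adj_wTop_f (Fin.val_ne_of_ne hs)
  have hEven : wEven i0 ∈ Y := by
    by_contra hEven
    have hφEven : φ ⟨_, hEven⟩ = ⟨0, hr⟩ :=
      color_eq_of_forall_adj_f φ hF hφF hEven fun s hs => adj_wEven_f i0 (Fin.val_ne_of_ne hs)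
    exact φ.valid_induce _ _ (adj_wEven_wTop i0) (hφEven.trans hφTop.symm)
  have hOdd : wOdd i0 ∉ Y := fun h => by
    simpa [wOdd, wEven] using
      hinj ⟨h, by simp [wOdd]⟩ ⟨hEven, by simp [wEven]⟩ (by simp)
  exact ⟨hOdd, color_eq_of_forall_adj_f φ hF hφF hOdd fun s hs => adj_wOdd_f i0 hs⟩

theorem color_u_mem (φ : ((colorSetGadget r m l cbar).induce Yᶜ).Coloring (Fin r))
    {C : Finset (Fin r)} (hl : l = r - C.card) (hinj : Function.Injective cbar)
    (hmem : ∀ i0, cbar i0 ∉ C) (hF : ∀ s, f s ∉ Y) (hφF : ∀ s (h : f s ∈ Yᶜ), φ ⟨f s, h⟩ = s)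
    (hY : (Y \ (Set.range u ∪ Set.range f)).ncard = l + 1) (hv : v ∈ Y) (i : Fin m)
    (hu : u i ∈ Yᶜ) : φ ⟨u i, hu⟩ ∈ C := by
  by_contra hC
  obtain ⟨i0, -, hi0⟩ := Finset.surjOn_of_injOn_of_card_le cbar (s := .univ) (t := Cᶜ)
    (fun i0 _ => by simpa using hmem i0) hinj.injOn (by simp [Finset.card_compl, hl])
    (Finset.mem_compl.2 hC)
  obtain ⟨hOdd, hφOdd⟩ := exists_wOdd_not_mem_color_eq φ hF hφF hY hv i0
  exact φ.valid_induce _ _ (adj_wOdd_u i0 i) (hφOdd.trans hi0)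

end colorSetGadget

theorem stmt_9_general (r m : ℕ) (C : Finset (Fin r)) (l : ℕ) (hl : l = r - C.card)
    (cbar : Fin l → Fin r) (hinj : Function.Injective cbar)
    (hmem : ∀ i, cbar i ∉ C) :
    (∀ Y : Set (BV r m l),
        ((colorSetGadget r m l cbar).induce Yᶜ).Colorable r →
        l + 1 ≤ (Y \ (Set.range (fun i : Fin m => (BV.u i : BV r m l)) ∪
          Set.range (fun s : Fin r => (BV.f s : BV r m l)))).ncard) ∧
    (∀ (Y : Set (BV r m l))
        (φ : ((colorSetGadget r m l cbar).induce Yᶜ).Coloring (Fin r)),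
        (∀ s : Fin r, (BV.f s : BV r m l) ∉ Y) →
        (Y \ (Set.range (fun i : Fin m => (BV.u i : BV r m l)) ∪
          Set.range (fun s : Fin r => (BV.f s : BV r m l)))).ncard = l + 1 →
        (∀ (s : Fin r) (h : (BV.f s : BV r m l) ∈ Yᶜ), φ ⟨BV.f s, h⟩ = s) →
        (BV.v : BV r m l) ∈ Y →
        ∀ (i : Fin m) (h : (BV.u i : BV r m l) ∈ Yᶜ), φ ⟨BV.u i, h⟩ ∈ C) :=
  ⟨fun _ ⟨φ⟩ => colorSetGadget.succ_le_ncard_diff φ,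
    fun _ φ hF hY hφF hv => colorSetGadget.color_u_mem φ hl hinj hmem hF hφF hY hv⟩

/-- For the color-set gadget `B` (with `r ≥ 2`, `1 ≤ m ≤ r`,
`C ⊊ [r]`, `|C| ≤ m`, `ℓ = r − |C|`):
(i) every `r`-deletion set `Y` of `B` satisfies `|Y ∖ (U ∪ F)| ≥ ℓ + 1`;
(ii) if `Y` is an `r`-deletion set with `Y ∩ F = ∅` and `|Y ∖ (U ∪ F)| = ℓ + 1`, and `φ`
is a proper `r`-coloring of `B − Y` with `φ(f_s) = s` for all `s`, then `v ∈ Y` implies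
`φ(u) ∈ C` for every `u ∈ U ∖ Y`. -/
theorem stmt_9 (r m : ℕ) (hr : 2 ≤ r) (hm1 : 1 ≤ m) (hmr : m ≤ r)
    (C : Finset (Fin r)) (hC : C ≠ Finset.univ) (hCm : C.card ≤ m)
    (l : ℕ) (hl : l = r - C.card)
    (cbar : Fin l → Fin r) (hinj : Function.Injective cbar)
    (hmem : ∀ i, cbar i ∉ C) :
    (∀ Y : Set (BV r m l),
        ((colorSetGadget r m l cbar).induce Yᶜ).Colorable r →
        l + 1 ≤ (Y \ (Set.range (fun i : Fin m => (BV.u i : BV r m l)) ∪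
          Set.range (fun s : Fin r => (BV.f s : BV r m l)))).ncard) ∧
    (∀ (Y : Set (BV r m l))
        (φ : ((colorSetGadget r m l cbar).induce Yᶜ).Coloring (Fin r)),
        (∀ s : Fin r, (BV.f s : BV r m l) ∉ Y) →
        (Y \ (Set.range (fun i : Fin m => (BV.u i : BV r m l)) ∪
          Set.range (fun s : Fin r => (BV.f s : BV r m l)))).ncard = l + 1 →
        (∀ (s : Fin r) (h : (BV.f s : BV r m l) ∈ Yᶜ), φ ⟨BV.f s, h⟩ = s) →
        (BV.v : BV r m l) ∈ Y →
        ∀ (i : Fin m) (h : (BV.u i : BV r m l) ∈ Yᶜ), φ ⟨BV.u i, h⟩ ∈ C) :=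
  stmt_9_general r m C l hl cbar hinj hmem
end

section
/- Let B be the color-set gadget for integers r ≥ 2, 1 ≤ m ≤ r, a proper subset C ⊊ {1,…,r} with |C| ≤ m, and ℓ = r − |C|. Let S ⊆ U ∪ {v}, let c : U ∖ S → {1,…,r} be injective, and, in case v ∉ S, let c_v ∈ {1,…,r} be arbitrary; assume that v ∉ S or that all values of c lie in C. Then there exists an r-deletion set Y of B with Y ∩ (U ∪ {v}) = S, Y ∩ F = ∅ and |Y ∖ (U ∪ F)| = ℓ + 1, together with a proper r-coloring φ of B − Y satisfying φ(f_s) = s for all s ∈ {1,…,r}, φ(u) = c(u) for all u ∈ U ∖ S, and, in case v ∉ S, φ(v) = c_v. -/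
namespace SimpleGraph

def Coloring.ofFromRel {V α : Type*} {R : V → V → Prop} {Y : Set V} (φ : V → α)
    (hφ : ∀ x ∉ Y, ∀ y ∉ Y, x ≠ y → R x y → φ x ≠ φ y) :
    ((fromRel R).induce Yᶜ).Coloring α :=
  Coloring.mk (fun x => φ x) fun {x y} hxy => by
    obtain ⟨hne, hR | hR⟩ := hxy
    · exact hφ x x.2 y y.2 hne hR
    · exact (hφ y y.2 x x.2 hne.symm hR).symm

end SimpleGraph

namespace ColorSetGadget

def avoid : {r : ℕ} → Fin r → Fin (r - 1) → Fin r
  | _ + 1, a, j => a.succAbove j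

theorem avoid_ne : {r : ℕ} → (a : Fin r) → (j : Fin (r - 1)) → avoid a j ≠ a
  | _ + 1, a, j => Fin.succAbove_ne a j

theorem avoid_injective : {r : ℕ} → (a : Fin r) → Function.Injective (avoid a)
  | _ + 1, _ => Fin.succAbove_right_injective

variable {r m l : ℕ}

/- In the paper's 1-based numbering, `oddW` is `{w_2, w_4, …, w_{2ℓ}}` and `evenW` is
`{w_1, w_3, …, w_{2ℓ+1}}`. -/
def oddW (r m l : ℕ) : Set (BV r m l) := Set.range fun i : Fin l => .w ⟨2 * i + 1, by omega⟩

def evenW (r m l : ℕ) : Set (BV r m l) := Set.range fun i : Fin (l + 1) => .w ⟨2 * i, by omega⟩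

@[simp]
theorem w_mem_oddW {k : Fin (2 * l + 1)} :
    (BV.w k : BV r m l) ∈ oddW r m l ↔ (k : ℕ) % 2 = 1 := by
  simp only [oddW, Set.mem_range, BV.w.injEq, Fin.ext_iff]
  exact ⟨by rintro ⟨i, hi⟩; omega, fun h => ⟨⟨k / 2, by omega⟩, by simp; omega⟩⟩

@[simp]
theorem w_mem_evenW {k : Fin (2 * l + 1)} :
    (BV.w k : BV r m l) ∈ evenW r m l ↔ (k : ℕ) % 2 = 0 := by
  simp only [evenW, Set.mem_range, BV.w.injEq, Fin.ext_iff]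
  exact ⟨by rintro ⟨i, hi⟩; omega, fun h => ⟨⟨k / 2, by omega⟩, by simp; omega⟩⟩

theorem oddW_subset_range_w : oddW r m l ⊆ Set.range BV.w :=
  Set.range_comp_subset_range _ _

theorem evenW_subset_range_w : evenW r m l ⊆ Set.range BV.w :=
  Set.range_comp_subset_range _ _

theorem ncard_oddW : (oddW r m l).ncard = l := by
  rw [oddW, Set.ncard_range_of_injective, Nat.card_eq_fintype_card, Fintype.card_fin]
  intro i j h
  simp only [BV.w.injEq, Fin.mk.injEq] at h
  exact Fin.ext (by omega)

theorem ncard_evenW : (evenW r m l).ncard = l + 1 := by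
  rw [evenW, Set.ncard_range_of_injective, Nat.card_eq_fintype_card, Fintype.card_fin]
  intro i j h
  simp only [BV.w.injEq, Fin.mk.injEq] at h
  exact Fin.ext (by omega)

section DeletionSet

variable {S W : Set (BV r m l)}

theorem union_inter_range_u_union_v (hS : S ⊆ Set.range BV.u ∪ {BV.v})
    (hW : W ⊆ Set.range BV.w) : (S ∪ W) ∩ (Set.range BV.u ∪ {BV.v}) = S := by
  refine Set.Subset.antisymm ?_ fun x hx => ⟨.inl hx, hS hx⟩
  rintro x ⟨hx | hx, hxU⟩
  · exact hx
  · obtain ⟨k, rfl⟩ := hW hx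
    simp at hxU

theorem f_notMem_union (hS : S ⊆ Set.range BV.u ∪ {BV.v})
    (hW : W ⊆ Set.range BV.w) (s : Fin r) : BV.f s ∉ S ∪ W := by
  rintro (h | h)
  · simpa using hS h
  · simpa using hW h

theorem union_diff_range_u_union_range_f (hS : S ⊆ Set.range BV.u ∪ {BV.v})
    (hW : W ⊆ Set.range BV.w) :
    (S ∪ W) \ (Set.range BV.u ∪ Set.range BV.f) = S ∩ {BV.v} ∪ W := by
  ext x
  constructor
  · rintro ⟨hx | hx, hxUF⟩
    · rcases hS hx with hxU | rfl
      · exact absurd (.inl hxU) hxUF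
      · exact .inl ⟨hx, rfl⟩
    · exact .inr hx
  · rintro (⟨hx, rfl⟩ | hx)
    · exact ⟨.inl hx, by simp⟩
    · obtain ⟨k, rfl⟩ := hW hx
      exact ⟨.inr hx, by simp⟩

end DeletionSet

variable [NeZero r]

def colorDeletingV (c : Fin m → Fin r) (cbar : Fin l → Fin r) : BV r m l → Fin r
  | .u i => c i
  | .v => 0
  | .w k => if h : (k : ℕ) < 2 * l then cbar ⟨k / 2, by omega⟩ else 0
  | .f s => s
  | .d0 j => avoid 0 j
  | .d i j => avoid (cbar i) j

def colorKeepingV (c : Fin m → Fin r) (cv : Fin r) : BV r m l → Fin r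
  | .u i => c i
  | .v => cv
  | .w _ => 0
  | .f s => s
  | .d0 j => avoid cv j
  | .d _ j => avoid 0 j

theorem colorDeletingV_w_of_eq_two_mul {c : Fin m → Fin r} {cbar : Fin l → Fin r}
    {k : Fin (2 * l + 1)} {i : Fin l} (hk : (k : ℕ) = 2 * i) :
    colorDeletingV c cbar (.w k) = cbar i := by
  rw [colorDeletingV, dif_pos (by omega)]
  congr
  omega

theorem colorDeletingV_w_of_eq_two_mul_l {c : Fin m → Fin r} {cbar : Fin l → Fin r}
    {k : Fin (2 * l + 1)} (hk : (k : ℕ) = 2 * l) : colorDeletingV c cbar (.w k) = 0 := by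
  rw [colorDeletingV, dif_neg (by omega)]

theorem colorKeepingV_ne {cbar : Fin l → Fin r} {S : Set (BV r m l)} {c : Fin m → Fin r}
    (cv : Fin r) (hc : Set.InjOn c {i | BV.u i ∉ S}) {x y : BV r m l}
    (hx : x ∉ S ∪ evenW r m l) (hy : y ∉ S ∪ evenW r m l) (hne : x ≠ y)
    (hxy : BRel r m l cbar x y) : colorKeepingV c cv x ≠ colorKeepingV c cv y := by
  simp only [Set.mem_union, not_or] at hx hy
  cases x <;> cases y <;> simp only [BRel, colorKeepingV, w_mem_evenW] at hx hy hxy ⊢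
  case u.u => exact fun h => hne (congrArg _ (hc hx.1 hy.1 h))
  case f.f => exact fun h => hne (congrArg _ h)
  case v.d0 => exact (avoid_ne _ _).symm
  case w.d => exact (avoid_ne _ _).symm
  case d0.d0 => exact (avoid_injective _).ne hxy
  case d.d => exact (avoid_injective _).ne hxy.2
  case w.f k s =>
    rcases hxy with ⟨i, hk, -⟩ | ⟨-, hs⟩
    · omega
    · exact fun h => hs (by simp [← h])
  -- each remaining edge has a deleted `w` as an endpoint
  all_goals omega

theorem colorDeletingV_ne {C : Finset (Fin r)} {cbar : Fin l → Fin r} (hcbar : ∀ i, cbar i ∉ C)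
    {S : Set (BV r m l)} (hv : BV.v ∈ S) {c : Fin m → Fin r}
    (hc : Set.InjOn c {i | BV.u i ∉ S}) (hcC : ∀ i, BV.u i ∉ S → c i ∈ C) {x y : BV r m l}
    (hx : x ∉ S ∪ oddW r m l) (hy : y ∉ S ∪ oddW r m l) (hne : x ≠ y)
    (hxy : BRel r m l cbar x y) : colorDeletingV c cbar x ≠ colorDeletingV c cbar y := by
  simp only [Set.mem_union, not_or] at hx hy
  cases x <;> cases y <;> simp only [BRel, w_mem_oddW] at hx hy hxy
  case u.u => exact fun h => hne (congrArg _ (hc hx.1 hy.1 h))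
  case f.f => exact fun h => hne (congrArg _ h)
  case v.d0 => exact absurd hv hx.1
  case w.v => exact absurd hv hy.1
  case d0.d0 => exact (avoid_injective _).ne hxy
  case d.d =>
    obtain ⟨rfl, hj⟩ := hxy
    exact (avoid_injective _).ne hj
  case w.u k i =>
    rw [colorDeletingV_w_of_eq_two_mul (i := ⟨k / 2, by omega⟩) (by simp; omega)]
    change cbar _ ≠ c i
    exact fun h => hcbar _ (h ▸ hcC i hy.1)
  case w.f k s =>
    rcases hxy with ⟨i, hk, hs⟩ | ⟨hk, hs⟩
    · rw [colorDeletingV_w_of_eq_two_mul hk]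
      exact hs.symm
    · rw [colorDeletingV_w_of_eq_two_mul_l (by omega)]
      change 0 ≠ s
      exact fun h => hs (by simp [← h])
  case w.d0 k j =>
    rw [colorDeletingV_w_of_eq_two_mul_l hxy]
    exact (avoid_ne _ _).symm
  case w.d k i j =>
    rw [colorDeletingV_w_of_eq_two_mul (hxy.resolve_right (by omega))]
    exact (avoid_ne _ _).symm
  -- each remaining edge has a deleted `w` as an endpoint
  all_goals omega

end ColorSetGadget

open ColorSetGadget

theorem stmt_10_general (r m : ℕ) (hr : 2 ≤ r)
    (C : Finset (Fin r))
    (l : ℕ)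
    (cbar : Fin l → Fin r)
    (hmem : ∀ i, cbar i ∉ C)
    (S : Set (BV r m l))
    (hS : S ⊆ Set.range (fun i : Fin m => (BV.u i : BV r m l)) ∪ {BV.v})
    (c : Fin m → Fin r)
    (hc : ∀ i j : Fin m, (BV.u i : BV r m l) ∉ S → (BV.u j : BV r m l) ∉ S →
      c i = c j → i = j)
    (cv : Fin r)
    (hcond : (BV.v : BV r m l) ∉ S ∨ ∀ i : Fin m, (BV.u i : BV r m l) ∉ S → c i ∈ C) :
    ∃ Y : Set (BV r m l),
      Y ∩ (Set.range (fun i : Fin m => (BV.u i : BV r m l)) ∪ {BV.v}) = S ∧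
      (∀ s : Fin r, (BV.f s : BV r m l) ∉ Y) ∧
      (Y \ (Set.range (fun i : Fin m => (BV.u i : BV r m l)) ∪
        Set.range (fun s : Fin r => (BV.f s : BV r m l)))).ncard = l + 1 ∧
      ∃ φ : ((colorSetGadget r m l cbar).induce Yᶜ).Coloring (Fin r),
        (∀ (s : Fin r) (h : (BV.f s : BV r m l) ∈ Yᶜ), φ ⟨BV.f s, h⟩ = s) ∧
        (∀ (i : Fin m) (_ : (BV.u i : BV r m l) ∉ S) (h : (BV.u i : BV r m l) ∈ Yᶜ),
          φ ⟨BV.u i, h⟩ = c i) ∧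
        ((BV.v : BV r m l) ∉ S → ∀ h : (BV.v : BV r m l) ∈ Yᶜ, φ ⟨BV.v, h⟩ = cv) := by
  have : NeZero r := ⟨by omega⟩
  have hc' : Set.InjOn c {i | BV.u i ∉ S} := fun i hi j hj => hc i j hi hj
  by_cases hv : BV.v ∈ S
  · have hcC := hcond.resolve_left (not_not.mpr hv)
    refine ⟨S ∪ oddW r m l, union_inter_range_u_union_v hS oddW_subset_range_w,
      f_notMem_union hS oddW_subset_range_w, ?_,
      .ofFromRel _ fun _ hx _ hy => colorDeletingV_ne hmem hv hc' hcC hx hy,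
      fun _ _ => rfl, fun _ _ _ => rfl, absurd hv⟩
    rw [union_diff_range_u_union_range_f hS oddW_subset_range_w,
      Set.inter_singleton_of_mem hv, Set.singleton_union,
      Set.ncard_insert_of_notMem (s := oddW r m l) (by simp [oddW]) (Set.finite_range _),
      ncard_oddW]
  · refine ⟨S ∪ evenW r m l, union_inter_range_u_union_v hS evenW_subset_range_w,
      f_notMem_union hS evenW_subset_range_w, ?_,
      .ofFromRel _ fun _ hx _ hy => colorKeepingV_ne cv hc' hx hy,
      fun _ _ => rfl, fun _ _ _ => rfl, fun _ _ => rfl⟩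
    rw [union_diff_range_u_union_range_f hS evenW_subset_range_w,
      Set.inter_singleton_of_notMem hv, Set.empty_union, ncard_evenW]

/-- For the color-set gadget `B` (with `r ≥ 2`, `1 ≤ m ≤ r`, `C ⊊ [r]`,
`|C| ≤ m`, `ℓ = r − |C|`): given `S ⊆ U ∪ {v}`, an injective coloring prescription `c`
on `U ∖ S`, and (if `v ∉ S`) a color `c_v`, such that `v ∉ S` or all values of `c` lie
in `C`, there exists an `r`-deletion set `Y` of `B` with `Y ∩ (U ∪ {v}) = S`, `Y ∩ F = ∅`
and `|Y ∖ (U ∪ F)| = ℓ + 1`, together with a proper `r`-coloring `φ` of `B − Y` with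
`φ(f_s) = s` for all `s`, `φ(u) = c(u)` on `U ∖ S`, and `φ(v) = c_v` if `v ∉ S`. -/
theorem stmt_10 (r m : ℕ) (hr : 2 ≤ r) (hm1 : 1 ≤ m) (hmr : m ≤ r)
    (C : Finset (Fin r)) (hC : C ≠ Finset.univ) (hCm : C.card ≤ m)
    (l : ℕ) (hl : l = r - C.card)
    (cbar : Fin l → Fin r) (hinj : Function.Injective cbar)
    (hmem : ∀ i, cbar i ∉ C)
    (S : Set (BV r m l))
    (hS : S ⊆ Set.range (fun i : Fin m => (BV.u i : BV r m l)) ∪ {BV.v})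
    (c : Fin m → Fin r)
    (hc : ∀ i j : Fin m, (BV.u i : BV r m l) ∉ S → (BV.u j : BV r m l) ∉ S →
      c i = c j → i = j)
    (cv : Fin r)
    (hcond : (BV.v : BV r m l) ∉ S ∨ ∀ i : Fin m, (BV.u i : BV r m l) ∉ S → c i ∈ C) :
    ∃ Y : Set (BV r m l),
      Y ∩ (Set.range (fun i : Fin m => (BV.u i : BV r m l)) ∪ {BV.v}) = S ∧
      (∀ s : Fin r, (BV.f s : BV r m l) ∉ Y) ∧
      (Y \ (Set.range (fun i : Fin m => (BV.u i : BV r m l)) ∪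
        Set.range (fun s : Fin r => (BV.f s : BV r m l)))).ncard = l + 1 ∧
      ∃ φ : ((colorSetGadget r m l cbar).induce Yᶜ).Coloring (Fin r),
        (∀ (s : Fin r) (h : (BV.f s : BV r m l) ∈ Yᶜ), φ ⟨BV.f s, h⟩ = s) ∧
        (∀ (i : Fin m) (_ : (BV.u i : BV r m l) ∉ S) (h : (BV.u i : BV r m l) ∈ Yᶜ),
          φ ⟨BV.u i, h⟩ = c i) ∧
        ((BV.v : BV r m l) ∉ S → ∀ h : (BV.v : BV r m l) ∈ Yᶜ, φ ⟨BV.v, h⟩ = cv) :=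
  stmt_10_general r m hr C l cbar hmem S hS c hc cv hcond
end

section
/- Let G be a finite connected simple graph with at least two vertices, let G' be its doubled graph, and let b be a natural number. Then G' has a dominating set of size at most b if and only if G has a total dominating set of size at most b. -/
/-!
A vertex `v` and its copy `v'` have the same neighbourhood in `G'`, namely the neighbourhood of
`v` in `G`. Projecting a dominating set `X` of `G'` to `G` therefore dominates, in the total
sense, every vertex of `G` except those `w` that no projected vertex is adjacent to; for such a
`w` both `w` and `w'` must lie in `X`, so one of them can be traded for a neighbour of `w`
without increasing the size. Conversely, a total dominating set of `G` dominates `G'`.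
-/

/-- The doubled graph `G'` of `G`: each vertex `v` gets a disjoint copy `v'`
(`Sum.inl v` is `v`, `Sum.inr v` is `v'`), and `E(G') = E(G) ∪
{{u,v'}, {u',v}, {u',v'} : {u,v} ∈ E(G)}`. -/
def doubled {α : Type*} (G : SimpleGraph α) : SimpleGraph (α ⊕ α) where
  Adj x y := G.Adj (Sum.elim id id x) (Sum.elim id id y)
  symm := ⟨fun _ _ h => G.adj_symm h⟩
  loopless := ⟨fun _ h => G.irrefl h⟩

namespace SimpleGraph

variable {α β : Type*}

def IsDominatingSet (H : SimpleGraph β) (X : Set β) : Prop :=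
  ∀ w, w ∈ X ∨ ∃ x ∈ X, H.Adj x w

def IsTotalDominatingSet (G : SimpleGraph α) (X : Set α) : Prop :=
  ∀ w, ∃ x ∈ X, G.Adj x w

theorem IsTotalDominatingSet.isDominatingSet_doubled_image_inl {G : SimpleGraph α} {Y : Set α}
    (hY : G.IsTotalDominatingSet Y) : (doubled G).IsDominatingSet (Sum.inl '' Y) := by
  intro w
  obtain ⟨x, hx, hadj⟩ := hY (Sum.elim id id w)
  exact Or.inr ⟨Sum.inl x, Set.mem_image_of_mem _ hx, hadj⟩

namespace IsDominatingSet

variable {G : SimpleGraph α} {X : Set (α ⊕ α)}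

theorem inl_mem_and_inr_mem (hX : (doubled G).IsDominatingSet X) {w : α}
    (hw : ¬∃ x ∈ X, G.Adj (Sum.elim id id x) w) : Sum.inl w ∈ X ∧ Sum.inr w ∈ X :=
  ⟨(hX (Sum.inl w)).resolve_right hw, (hX (Sum.inr w)).resolve_right hw⟩

theorem exists_isTotalDominatingSet_ncard_le (hX : (doubled G).IsDominatingSet X)
    (hfin : X.Finite) (hG : ∀ w, ∃ u, G.Adj u w) :
    ∃ Y : Set α, G.IsTotalDominatingSet Y ∧ Y.ncard ≤ X.ncard := by
  classical
  choose nbr hnbr using hG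
  set N : Set α := {w | ∃ x ∈ X, G.Adj (Sum.elim id id x) w}
  let g : α ⊕ α → α := Sum.elim id fun v => if v ∈ N then v else nbr v
  have proj_mem : ∀ x ∈ X, Sum.elim id id x ∈ g '' X := by
    rintro (v | v) hx
    · exact ⟨Sum.inl v, hx, rfl⟩
    · by_cases hv : v ∈ N
      · exact ⟨Sum.inr v, hx, if_pos hv⟩
      · exact ⟨Sum.inl v, (hX.inl_mem_and_inr_mem hv).1, rfl⟩
  refine ⟨g '' X, fun w => ?_, Set.ncard_image_le hfin⟩
  by_cases hw : w ∈ N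
  · obtain ⟨x, hx, hadj⟩ := hw
    exact ⟨_, proj_mem x hx, hadj⟩
  · exact ⟨nbr w, ⟨Sum.inr w, (hX.inl_mem_and_inr_mem hw).2, if_neg hw⟩, hnbr w⟩

end IsDominatingSet

end SimpleGraph

open SimpleGraph in
/-- For a finite connected graph `G` with at least two vertices and a
natural number `b`: the doubled graph `G'` has a dominating set of size at most `b` iff
`G` has a total dominating set of size at most `b`. -/
theorem stmt_13 {α : Type*} [Fintype α] (G : SimpleGraph α)
    (hconn : G.Connected) (hcard : 2 ≤ Fintype.card α) (b : ℕ) :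
    (∃ X : Set (α ⊕ α),
        (∀ w : α ⊕ α, w ∈ X ∨ ∃ x ∈ X, (doubled G).Adj x w) ∧ X.ncard ≤ b) ↔
    (∃ X : Set α, (∀ w : α, ∃ x ∈ X, G.Adj x w) ∧ X.ncard ≤ b) := by
  have : Nontrivial α := Fintype.one_lt_card_iff_nontrivial.mp hcard
  have hG : ∀ w, ∃ u, G.Adj u w := fun w =>
    (hconn.preconnected.exists_adj_of_nontrivial w).imp fun _ h => h.symm
  constructor
  · rintro ⟨X, hX, hXb⟩
    obtain ⟨Y, hY, hYX⟩ :=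
      IsDominatingSet.exists_isTotalDominatingSet_ncard_le hX X.toFinite hG
    exact ⟨Y, hY, hYX.trans hXb⟩
  · rintro ⟨Y, hY, hYb⟩
    refine ⟨Sum.inl '' Y, IsTotalDominatingSet.isDominatingSet_doubled_image_inl hY, ?_⟩
    rwa [Set.ncard_image_of_injective _ Sum.inl_injective]
end

section
/- Under the stated assumptions on the block gadget inside G, every total dominating set X of G satisfies |X ∩ P| ≥ 2, |X ∩ Z| ≥ 2, and y_1 ∈ X. Moreover, if in addition |X ∩ B| ≤ 4, then X ∩ P ∈ 𝒮 and X ∩ Z_0 = {z_{X∩P}}. -/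
lemma two_le_ncard_aux {V : Type*} {s : Set V} (hs : s.Finite) {a b : V}
    (ha : a ∈ s) (hb : b ∈ s) (hab : a ≠ b) : 2 ≤ s.ncard := by
  calc 2 = ({a, b} : Set V).ncard := (Set.ncard_pair hab).symm
    _ ≤ s.ncard := Set.ncard_le_ncard
        (by simp [Set.insert_subset_iff, Set.singleton_subset_iff, ha, hb]) hs

set_option maxHeartbeats 1000000 in
/-- The block gadget: `G` contains 18 pairwise distinct vertices
`p_1,…,p_4` (with `P = {p_1,…,p_4}`), `q_1,…,q_4`, `z_S` and `ẑ_S` for each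
`S ∈ 𝒮 = {{p_1,p_2},{p_1,p_4},{p_2,p_3},{p_3,p_4}}` (here `z12, z14, z23, z34` and
`zh12, zh14, zh23, zh34`), and `y_1, y_2`, subject to the stated neighborhood conditions.
Then every total dominating set `X` of `G` satisfies `|X ∩ P| ≥ 2`, `|X ∩ Z| ≥ 2` and
`y_1 ∈ X`; and if moreover `|X ∩ B| ≤ 4`, then `X ∩ P ∈ 𝒮` and `X ∩ Z_0 = {z_{X∩P}}`. -/
theorem stmt_16 {V : Type*} (G : SimpleGraph V)
    (p1 p2 p3 p4 q1 q2 q3 q4 z12 z14 z23 z34 zh12 zh14 zh23 zh34 y1 y2 : V)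
    (hdist : ([p1, p2, p3, p4, q1, q2, q3, q4, z12, z14, z23, z34,
      zh12, zh14, zh23, zh34, y1, y2] : List V).Pairwise (· ≠ ·))
    (hq1 : G.neighborSet q1 = ({p1, p2, p3, p4} : Set V) \ {p1})
    (hq2 : G.neighborSet q2 = ({p1, p2, p3, p4} : Set V) \ {p2})
    (hq3 : G.neighborSet q3 = ({p1, p2, p3, p4} : Set V) \ {p3})
    (hq4 : G.neighborSet q4 = ({p1, p2, p3, p4} : Set V) \ {p4})
    (hzh12 : G.neighborSet zh12 = (({p1, p2, p3, p4} : Set V) \ {p1, p2}) ∪ {z12})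
    (hzh14 : G.neighborSet zh14 = (({p1, p2, p3, p4} : Set V) \ {p1, p4}) ∪ {z14})
    (hzh23 : G.neighborSet zh23 = (({p1, p2, p3, p4} : Set V) \ {p2, p3}) ∪ {z23})
    (hzh34 : G.neighborSet zh34 = (({p1, p2, p3, p4} : Set V) \ {p3, p4}) ∪ {z34})
    (hy2 : G.neighborSet y2 = {y1})
    (hy1 : G.neighborSet y1 = ({z12, z14, z23, z34} : Set V) ∪ {y2})
    (hclique : G.IsClique ({z12, z14, z23, z34, y1} : Set V))
    (h12 : G.Adj p1 p2) (h23 : G.Adj p2 p3) (h34 : G.Adj p3 p4)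
    (h13 : ¬ G.Adj p1 p3) (h24 : ¬ G.Adj p2 p4) (h14 : ¬ G.Adj p1 p4)
    (hp2 : G.neighborSet p2 = ({p1, p3, q1, q3, q4, zh14, zh34} : Set V))
    (hp3 : G.neighborSet p3 = ({p2, p4, q1, q2, q4, zh12, zh14} : Set V))
    (X : Set V) (hX : ∀ w : V, ∃ x ∈ X, G.Adj x w) :
    2 ≤ (X ∩ ({p1, p2, p3, p4} : Set V)).ncard ∧
    2 ≤ (X ∩ (({z12, z14, z23, z34} : Set V) ∪ {zh12, zh14, zh23, zh34}
      ∪ {y1, y2})).ncard ∧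
    y1 ∈ X ∧
    ((X ∩ (({p1, p2, p3, p4} : Set V) ∪ {q1, q2, q3, q4}
        ∪ ({z12, z14, z23, z34} : Set V) ∪ {zh12, zh14, zh23, zh34}
        ∪ {y1, y2})).ncard ≤ 4 →
      ((X ∩ ({p1, p2, p3, p4} : Set V) = {p1, p2} ∧
          X ∩ ({z12, z14, z23, z34} : Set V) = {z12}) ∨
        (X ∩ ({p1, p2, p3, p4} : Set V) = {p1, p4} ∧
          X ∩ ({z12, z14, z23, z34} : Set V) = {z14}) ∨
        (X ∩ ({p1, p2, p3, p4} : Set V) = {p2, p3} ∧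
          X ∩ ({z12, z14, z23, z34} : Set V) = {z23}) ∨
        (X ∩ ({p1, p2, p3, p4} : Set V) = {p3, p4} ∧
          X ∩ ({z12, z14, z23, z34} : Set V) = {z34}))) := by
  simp only [List.pairwise_cons, List.mem_cons, List.not_mem_nil, List.mem_singleton,
    forall_eq_or_imp, forall_eq, List.Pairwise.nil, and_true,
    IsEmpty.forall_iff, implies_true] at hdist
  obtain ⟨⟨hne_p1_p2, hne_p1_p3, hne_p1_p4, hne_p1_q1, hne_p1_q2, hne_p1_q3, hne_p1_q4, hne_p1_z12, hne_p1_z14, hne_p1_z23, hne_p1_z34, hne_p1_zh12, hne_p1_zh14, hne_p1_zh23, hne_p1_zh34, hne_p1_y1, hne_p1_y2⟩, ⟨hne_p2_p3, hne_p2_p4, hne_p2_q1, hne_p2_q2, hne_p2_q3, hne_p2_q4, hne_p2_z12, hne_p2_z14, hne_p2_z23, hne_p2_z34, hne_p2_zh12, hne_p2_zh14, hne_p2_zh23, hne_p2_zh34, hne_p2_y1, hne_p2_y2⟩, ⟨hne_p3_p4, hne_p3_q1, hne_p3_q2, hne_p3_q3, hne_p3_q4, hne_p3_z12, hne_p3_z14,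 hne_p3_z23, hne_p3_z34, hne_p3_zh12, hne_p3_zh14, hne_p3_zh23, hne_p3_zh34, hne_p3_y1, hne_p3_y2⟩, ⟨hne_p4_q1, hne_p4_q2, hne_p4_q3, hne_p4_q4, hne_p4_z12, hne_p4_z14, hne_p4_z23, hne_p4_z34, hne_p4_zh12, hne_p4_zh14, hne_p4_zh23, hne_p4_zh34, hne_p4_y1, hne_p4_y2⟩, ⟨hne_q1_q2, hne_q1_q3, hne_q1_q4, hne_q1_z12, hne_q1_z14, hne_q1_z23, hne_q1_z34, hne_q1_zh12, hne_q1_zh14, hne_q1_zh23, hne_q1_zh34, hne_q1_y1, hne_q1_y2⟩, ⟨hne_q2_q3, hne_q2_q4, hne_q2_z12, hne_q2_z14, hne_q2_z23, hne_q2_z34, hne_q2_zh12, hne_q2_zh14, hne_q2_zh23, hne_q2_zh34, hne_q2_y1, hne_q2_y2⟩, ⟨hne_q3_q4, hne_q3_z12, hne_q3_z14, hne_q3_z23, hne_q3_z34, hne_q3_zh12, hne_q3_zh14, hne_q3_zh23, hne_q3_zh34, hne_q3_y1, hne_q3_y2⟩, ⟨hne_q4_z12, hne_q4_z14, hne_q4_z23,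 hne_q4_z34, hne_q4_zh12, hne_q4_zh14, hne_q4_zh23, hne_q4_zh34, hne_q4_y1, hne_q4_y2⟩, ⟨hne_z12_z14, hne_z12_z23, hne_z12_z34, hne_z12_zh12, hne_z12_zh14, hne_z12_zh23, hne_z12_zh34, hne_z12_y1, hne_z12_y2⟩, ⟨hne_z14_z23, hne_z14_z34, hne_z14_zh12, hne_z14_zh14, hne_z14_zh23, hne_z14_zh34, hne_z14_y1, hne_z14_y2⟩, ⟨hne_z23_z34, hne_z23_zh12, hne_z23_zh14, hne_z23_zh23, hne_z23_zh34, hne_z23_y1, hne_z23_y2⟩, ⟨hne_z34_zh12, hne_z34_zh14, hne_z34_zh23, hne_z34_zh34, hne_z34_y1, hne_z34_y2⟩, ⟨hne_zh12_zh14, hne_zh12_zh23, hne_zh12_zh34, hne_zh12_y1, hne_zh12_y2⟩, ⟨hne_zh14_zh23, hne_zh14_zh34, hne_zh14_y1, hne_zh14_y2⟩, ⟨hne_zh23_zh34, hne_zh23_y1, hne_zh23_y2⟩, ⟨hne_zh34_y1, hne_zh34_y2⟩, hne_y1_y2⟩ := hdist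
  have dom : ∀ v : V, ∃ x ∈ X, x ∈ G.neighborSet v := by
    intro v; obtain ⟨x, hx, hadj⟩ := hX v; exact ⟨x, hx, hadj.symm⟩
  -- y1 ∈ X
  have hy1X : y1 ∈ X := by
    obtain ⟨x, hx, hmem⟩ := dom y2
    rw [hy2, Set.mem_singleton_iff] at hmem
    rwa [hmem] at hx
  -- a second element of Z
  obtain ⟨w, hwX, hwmem⟩ := dom y1
  rw [hy1] at hwmem
  simp only [Set.mem_union, Set.mem_insert_iff, Set.mem_singleton_iff] at hwmem
  have hwy1 : w ≠ y1 := by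
    rcases hwmem with (rfl | rfl | rfl | rfl) | rfl
    exacts [hne_z12_y1, hne_z14_y1, hne_z23_y1, hne_z34_y1, hne_y1_y2.symm]
  -- finiteness
  have finP : ({p1, p2, p3, p4} : Set V).Finite :=
    (((Set.finite_singleton p4).insert p3).insert p2).insert p1
  have finZ0 : ({z12, z14, z23, z34} : Set V).Finite :=
    (((Set.finite_singleton z34).insert z23).insert z14).insert z12
  have finZh : ({zh12, zh14, zh23, zh34} : Set V).Finite :=
    (((Set.finite_singleton zh34).insert zh23).insert zh14).insert zh12
  have finY : ({y1, y2} : Set V).Finite := (Set.finite_singleton y2).insert y1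
  have finQ : ({q1, q2, q3, q4} : Set V).Finite :=
    (((Set.finite_singleton q4).insert q3).insert q2).insert q1
  have finZ : (({z12, z14, z23, z34} : Set V) ∪ {zh12, zh14, zh23, zh34}
      ∪ {y1, y2}).Finite := (finZ0.union finZh).union finY
  have finB : (({p1, p2, p3, p4} : Set V) ∪ {q1, q2, q3, q4}
      ∪ ({z12, z14, z23, z34} : Set V) ∪ {zh12, zh14, zh23, zh34}
      ∪ {y1, y2}).Finite := ((((finP.union finQ).union finZ0).union finZh).union finY)
  have finA : (X ∩ ({p1, p2, p3, p4} : Set V)).Finite := finP.subset Set.inter_subset_right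
  have finC : (X ∩ (({z12, z14, z23, z34} : Set V) ∪ {zh12, zh14, zh23, zh34}
      ∪ {y1, y2})).Finite := finZ.subset Set.inter_subset_right
  have finXB : (X ∩ (({p1, p2, p3, p4} : Set V) ∪ {q1, q2, q3, q4}
      ∪ ({z12, z14, z23, z34} : Set V) ∪ {zh12, zh14, zh23, zh34}
      ∪ {y1, y2})).Finite := finB.subset Set.inter_subset_right
  -- claim 1
  have claim1 : 2 ≤ (X ∩ ({p1, p2, p3, p4} : Set V)).ncard := by
    obtain ⟨a, haX, ha⟩ := dom q1
    rw [hq1] at ha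
    simp only [Set.mem_diff, Set.mem_insert_iff, Set.mem_singleton_iff] at ha
    obtain ⟨ha, hane⟩ := ha
    rcases ha with rfl | rfl | rfl | rfl
    · exact absurd rfl hane
    · obtain ⟨b, hbX, hb⟩ := dom q2
      rw [hq2] at hb
      simp only [Set.mem_diff, Set.mem_insert_iff, Set.mem_singleton_iff] at hb
      refine two_le_ncard_aux finA ⟨haX, by simp⟩
        ⟨hbX, by rcases hb.1 with rfl | rfl | rfl | rfl <;> simp⟩ (Ne.symm hb.2)
    · obtain ⟨b, hbX, hb⟩ := dom q3
      rw [hq3] at hb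
      simp only [Set.mem_diff, Set.mem_insert_iff, Set.mem_singleton_iff] at hb
      refine two_le_ncard_aux finA ⟨haX, by simp⟩
        ⟨hbX, by rcases hb.1 with rfl | rfl | rfl | rfl <;> simp⟩ (Ne.symm hb.2)
    · obtain ⟨b, hbX, hb⟩ := dom q4
      rw [hq4] at hb
      simp only [Set.mem_diff, Set.mem_insert_iff, Set.mem_singleton_iff] at hb
      refine two_le_ncard_aux finA ⟨haX, by simp⟩
        ⟨hbX, by rcases hb.1 with rfl | rfl | rfl | rfl <;> simp⟩ (Ne.symm hb.2)
  -- claim 2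
  have hwZ : w ∈ ({z12, z14, z23, z34} : Set V) ∪ {zh12, zh14, zh23, zh34} ∪ {y1, y2} := by
    rcases hwmem with (rfl | rfl | rfl | rfl) | rfl <;> simp
  have claim2 : 2 ≤ (X ∩ (({z12, z14, z23, z34} : Set V) ∪ {zh12, zh14, zh23, zh34}
      ∪ {y1, y2})).ncard :=
    two_le_ncard_aux finC ⟨hy1X, by simp⟩ ⟨hwX, hwZ⟩ (Ne.symm hwy1)
  refine ⟨claim1, claim2, hy1X, ?_⟩
  intro hB
  -- disjointness of the P-part and Z-part
  have hPZ : ∀ x : V, x ∈ ({p1, p2, p3, p4} : Set V) →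
      x ∉ (({z12, z14, z23, z34} : Set V) ∪ {zh12, zh14, zh23, zh34} ∪ {y1, y2}) := by
    intro x hx
    simp only [Set.mem_insert_iff, Set.mem_singleton_iff] at hx
    rcases hx with rfl | rfl | rfl | rfl <;>
      simp [hne_p1_z12, hne_p1_z14, hne_p1_z23, hne_p1_z34, hne_p1_zh12, hne_p1_zh14, hne_p1_zh23, hne_p1_zh34, hne_p1_y1, hne_p1_y2, hne_p2_z12, hne_p2_z14, hne_p2_z23, hne_p2_z34, hne_p2_zh12, hne_p2_zh14, hne_p2_zh23, hne_p2_zh34, hne_p2_y1, hne_p2_y2, hne_p3_z12, hne_p3_z14, hne_p3_z23, hne_p3_z34, hne_p3_zh12, hne_p3_zh14, hne_p3_zh23, hne_p3_zh34, hne_p3_y1, hne_p3_y2, hne_p4_z12, hne_p4_z14, hne_p4_z23, hne_p4_z34, hne_p4_zh12, hne_p4_zh14, hne_p4_zh23, hne_p4_zh34, hne_p4_y1, hne_p4_y2]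
  have hdisjAC : Disjoint (X ∩ ({p1, p2, p3, p4} : Set V))
      (X ∩ (({z12, z14, z23, z34} : Set V) ∪ {zh12, zh14, zh23, zh34} ∪ {y1, y2})) := by
    rw [Set.disjoint_left]
    rintro x ⟨hx1, hx2⟩ ⟨hx3, hx4⟩
    exact hPZ x hx2 hx4
  have hACsub : (X ∩ ({p1, p2, p3, p4} : Set V)) ∪
      (X ∩ (({z12, z14, z23, z34} : Set V) ∪ {zh12, zh14, zh23, zh34} ∪ {y1, y2})) ⊆
      X ∩ (({p1, p2, p3, p4} : Set V) ∪ {q1, q2, q3, q4}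
        ∪ ({z12, z14, z23, z34} : Set V) ∪ {zh12, zh14, zh23, zh34} ∪ {y1, y2}) := by
    rintro x (⟨hx1, hx2⟩ | ⟨hx1, hx2⟩) <;> refine ⟨hx1, ?_⟩ <;>
      simp only [Set.mem_union] at hx2 ⊢
    · exact Or.inl (Or.inl (Or.inl (Or.inl hx2)))
    · rcases hx2 with (h | h) | h
      exacts [Or.inl (Or.inl (Or.inr h)), Or.inl (Or.inr h), Or.inr h]
  have hcard4 : (X ∩ ({p1, p2, p3, p4} : Set V)).ncard +
      (X ∩ (({z12, z14, z23, z34} : Set V) ∪ {zh12, zh14, zh23, zh34}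
        ∪ {y1, y2})).ncard ≤ 4 := by
    rw [← Set.ncard_union_eq hdisjAC finA finC]
    exact le_trans (Set.ncard_le_ncard hACsub finXB) hB
  have hA2 : (X ∩ ({p1, p2, p3, p4} : Set V)).ncard ≤ 2 := by omega
  have hC2 : (X ∩ (({z12, z14, z23, z34} : Set V) ∪ {zh12, zh14, zh23, zh34}
      ∪ {y1, y2})).ncard ≤ 2 := by omega
  -- no extra vertex of B can be in X
  have hextra : ∀ v : V, v ∈ (({p1, p2, p3, p4} : Set V) ∪ {q1, q2, q3, q4}
        ∪ ({z12, z14, z23, z34} : Set V) ∪ {zh12, zh14, zh23, zh34} ∪ {y1, y2}) →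
      v ∉ ({p1, p2, p3, p4} : Set V) →
      v ∉ (({z12, z14, z23, z34} : Set V) ∪ {zh12, zh14, zh23, zh34} ∪ {y1, y2}) →
      v ∉ X := by
    intro v hvB hvP hvZ hvX
    have hnotin : v ∉ (X ∩ ({p1, p2, p3, p4} : Set V)) ∪
        (X ∩ (({z12, z14, z23, z34} : Set V) ∪ {zh12, zh14, zh23, zh34} ∪ {y1, y2})) := by
      rintro (⟨-, h⟩ | ⟨-, h⟩)
      exacts [hvP h, hvZ h]
    have hins : insert v ((X ∩ ({p1, p2, p3, p4} : Set V)) ∪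
        (X ∩ (({z12, z14, z23, z34} : Set V) ∪ {zh12, zh14, zh23, zh34} ∪ {y1, y2}))) ⊆
        X ∩ (({p1, p2, p3, p4} : Set V) ∪ {q1, q2, q3, q4}
          ∪ ({z12, z14, z23, z34} : Set V) ∪ {zh12, zh14, zh23, zh34} ∪ {y1, y2}) := by
      rintro x (rfl | hx)
      exacts [⟨hvX, hvB⟩, hACsub hx]
    have h5 : ((X ∩ ({p1, p2, p3, p4} : Set V)) ∪
        (X ∩ (({z12, z14, z23, z34} : Set V) ∪ {zh12, zh14, zh23, zh34}
          ∪ {y1, y2}))).ncard + 1 ≤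
        (X ∩ (({p1, p2, p3, p4} : Set V) ∪ {q1, q2, q3, q4}
          ∪ ({z12, z14, z23, z34} : Set V) ∪ {zh12, zh14, zh23, zh34} ∪ {y1, y2})).ncard := by
      rw [← Set.ncard_insert_of_notMem hnotin (finA.union finC)]
      exact Set.ncard_le_ncard hins finXB
    rw [Set.ncard_union_eq hdisjAC finA finC] at h5
    omega
  have hq1X : q1 ∉ X := hextra q1 (by simp) (by simp [hne_p1_q1.symm, hne_p2_q1.symm, hne_p3_q1.symm, hne_p4_q1.symm]) (by simp [hne_q1_z12, hne_q1_z14, hne_q1_z23, hne_q1_z34, hne_q1_zh12, hne_q1_zh14, hne_q1_zh23, hne_q1_zh34, hne_q1_y1, hne_q1_y2])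
  have hq2X : q2 ∉ X := hextra q2 (by simp) (by simp [hne_p1_q2.symm, hne_p2_q2.symm, hne_p3_q2.symm, hne_p4_q2.symm]) (by simp [hne_q2_z12, hne_q2_z14, hne_q2_z23, hne_q2_z34, hne_q2_zh12, hne_q2_zh14, hne_q2_zh23, hne_q2_zh34, hne_q2_y1, hne_q2_y2])
  have hq3X : q3 ∉ X := hextra q3 (by simp) (by simp [hne_p1_q3.symm, hne_p2_q3.symm, hne_p3_q3.symm, hne_p4_q3.symm]) (by simp [hne_q3_z12, hne_q3_z14, hne_q3_z23, hne_q3_z34, hne_q3_zh12, hne_q3_zh14, hne_q3_zh23, hne_q3_zh34, hne_q3_y1, hne_q3_y2])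
  have hq4X : q4 ∉ X := hextra q4 (by simp) (by simp [hne_p1_q4.symm, hne_p2_q4.symm, hne_p3_q4.symm, hne_p4_q4.symm]) (by simp [hne_q4_z12, hne_q4_z14, hne_q4_z23, hne_q4_z34, hne_q4_zh12, hne_q4_zh14, hne_q4_zh23, hne_q4_zh34, hne_q4_y1, hne_q4_y2])
  -- no ẑ vertex can be in X
  have hzh_gen : ∀ v : V, v ≠ y1 → v ≠ w →
      v ∈ (({z12, z14, z23, z34} : Set V) ∪ {zh12, zh14, zh23, zh34} ∪ {y1, y2}) →
      v ∉ X := by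
    intro v hv1 hvw hvZ hvX
    have h3 : ({y1, w, v} : Set V).ncard = 3 := by
      rw [Set.ncard_insert_of_notMem (by
          simp only [Set.mem_insert_iff, Set.mem_singleton_iff]
          push_neg
          exact ⟨Ne.symm hwy1, Ne.symm hv1⟩) ((Set.finite_singleton v).insert w),
        Set.ncard_pair (Ne.symm hvw)]
    have hsub3 : ({y1, w, v} : Set V) ⊆
        X ∩ (({z12, z14, z23, z34} : Set V) ∪ {zh12, zh14, zh23, zh34} ∪ {y1, y2}) := by
      intro x hx
      simp only [Set.mem_insert_iff, Set.mem_singleton_iff] at hx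
      rcases hx with rfl | rfl | rfl
      exacts [⟨hy1X, by simp⟩, ⟨hwX, hwZ⟩, ⟨hvX, hvZ⟩]
    have := h3 ▸ Set.ncard_le_ncard hsub3 finC
    omega
  have hzh12w : zh12 ≠ w := by
    rcases hwmem with (rfl | rfl | rfl | rfl) | rfl
    exacts [hne_z12_zh12.symm, hne_z14_zh12.symm, hne_z23_zh12.symm, hne_z34_zh12.symm,
      hne_zh12_y2]
  have hzh14w : zh14 ≠ w := by
    rcases hwmem with (rfl | rfl | rfl | rfl) | rfl
    exacts [hne_z12_zh14.symm, hne_z14_zh14.symm, hne_z23_zh14.symm, hne_z34_zh14.symm,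
      hne_zh14_y2]
  have hzh34w : zh34 ≠ w := by
    rcases hwmem with (rfl | rfl | rfl | rfl) | rfl
    exacts [hne_z12_zh34.symm, hne_z14_zh34.symm, hne_z23_zh34.symm, hne_z34_zh34.symm,
      hne_zh34_y2]
  have hzh12X : zh12 ∉ X := hzh_gen zh12 hne_zh12_y1 hzh12w (by simp)
  have hzh14X : zh14 ∉ X := hzh_gen zh14 hne_zh14_y1 hzh14w (by simp)
  have hzh34X : zh34 ∉ X := hzh_gen zh34 hne_zh34_y1 hzh34w (by simp)
  -- p2 and p3 domination
  obtain ⟨x2, hx2X, hx2⟩ := dom p2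
  rw [hp2] at hx2
  simp only [Set.mem_insert_iff, Set.mem_singleton_iff] at hx2
  have h13X : p1 ∈ X ∨ p3 ∈ X := by
    rcases hx2 with rfl | rfl | rfl | rfl | rfl | rfl | rfl
    exacts [Or.inl hx2X, Or.inr hx2X, absurd hx2X hq1X, absurd hx2X hq3X,
      absurd hx2X hq4X, absurd hx2X hzh14X, absurd hx2X hzh34X]
  obtain ⟨x3, hx3X, hx3⟩ := dom p3
  rw [hp3] at hx3
  simp only [Set.mem_insert_iff, Set.mem_singleton_iff] at hx3
  have h24X : p2 ∈ X ∨ p4 ∈ X := by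
    rcases hx3 with rfl | rfl | rfl | rfl | rfl | rfl | rfl
    exacts [Or.inl hx3X, Or.inr hx3X, absurd hx3X hq1X, absurd hx3X hq2X,
      absurd hx3X hq4X, absurd hx3X hzh12X, absurd hx3X hzh14X]
  -- generic conclusions
  have hAeq_gen : ∀ a b : V, a ∈ X → b ∈ X → a ∈ ({p1, p2, p3, p4} : Set V) →
      b ∈ ({p1, p2, p3, p4} : Set V) → a ≠ b →
      X ∩ ({p1, p2, p3, p4} : Set V) = {a, b} := by
    intro a b haX hbX haP hbP hab
    refine (Set.eq_of_subset_of_ncard_le ?_ ?_ finA).symm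
    · intro x hx
      simp only [Set.mem_insert_iff, Set.mem_singleton_iff] at hx
      rcases hx with rfl | rfl
      exacts [⟨haX, haP⟩, ⟨hbX, hbP⟩]
    · rw [Set.ncard_pair hab]; exact hA2
  have hy1Z0 : y1 ∉ ({z12, z14, z23, z34} : Set V) := by
    simp [hne_z12_y1.symm, hne_z14_y1.symm, hne_z23_y1.symm, hne_z34_y1.symm]
  have hZ0eq_gen : ∀ zS : V, zS ∈ X → zS ∈ ({z12, z14, z23, z34} : Set V) →
      y1 ≠ zS → X ∩ ({z12, z14, z23, z34} : Set V) = {zS} := by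
    intro zS hzX hzZ0 hy1z
    have hzZ : zS ∈ (({z12, z14, z23, z34} : Set V) ∪ {zh12, zh14, zh23, zh34}
        ∪ {y1, y2}) := Set.mem_union_left _ (Set.mem_union_left _ hzZ0)
    have hCeq : X ∩ (({z12, z14, z23, z34} : Set V) ∪ {zh12, zh14, zh23, zh34}
        ∪ {y1, y2}) = {y1, zS} := by
      refine (Set.eq_of_subset_of_ncard_le ?_ ?_ finC).symm
      · intro x hx
        simp only [Set.mem_insert_iff, Set.mem_singleton_iff] at hx
        rcases hx with rfl | rfl
        exacts [⟨hy1X, by simp⟩, ⟨hzX, hzZ⟩]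
      · rw [Set.ncard_pair hy1z]; exact hC2
    apply Set.Subset.antisymm
    · rintro x ⟨hxX, hxZ0⟩
      have hx : x ∈ X ∩ (({z12, z14, z23, z34} : Set V) ∪ {zh12, zh14, zh23, zh34}
          ∪ {y1, y2}) := ⟨hxX, Set.mem_union_left _ (Set.mem_union_left _ hxZ0)⟩
      rw [hCeq] at hx
      simp only [Set.mem_insert_iff, Set.mem_singleton_iff] at hx
      rcases hx with rfl | rfl
      · exact absurd hxZ0 hy1Z0
      · simp
    · intro x hx
      rw [Set.mem_singleton_iff] at hx
      subst hx
      exact ⟨hzX, hzZ0⟩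
  -- final case analysis
  rcases h13X with h1X | h3X <;> rcases h24X with h2X | h4X
  · -- X ∩ P = {p1, p2}
    have hAeq := hAeq_gen p1 p2 h1X h2X (by simp) (by simp) hne_p1_p2
    obtain ⟨x, hxX, hxm⟩ := dom zh12
    rw [hzh12] at hxm
    simp only [Set.mem_union, Set.mem_diff, Set.mem_insert_iff, Set.mem_singleton_iff] at hxm
    have hz12X : z12 ∈ X := by
      rcases hxm with ⟨hp, hnp⟩ | rfl
      · exfalso
        have hxA : x ∈ X ∩ ({p1, p2, p3, p4} : Set V) :=
          ⟨hxX, by rcases hp with rfl | rfl | rfl | rfl <;> simp⟩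
        rw [hAeq] at hxA
        simp only [Set.mem_insert_iff, Set.mem_singleton_iff] at hxA
        exact hnp hxA
      · exact hxX
    exact Or.inl ⟨hAeq, hZ0eq_gen z12 hz12X (by simp) hne_z12_y1.symm⟩
  · -- X ∩ P = {p1, p4}
    have hAeq := hAeq_gen p1 p4 h1X h4X (by simp) (by simp) hne_p1_p4
    obtain ⟨x, hxX, hxm⟩ := dom zh14
    rw [hzh14] at hxm
    simp only [Set.mem_union, Set.mem_diff, Set.mem_insert_iff, Set.mem_singleton_iff] at hxm
    have hz14X : z14 ∈ X := by
      rcases hxm with ⟨hp, hnp⟩ | rfl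
      · exfalso
        have hxA : x ∈ X ∩ ({p1, p2, p3, p4} : Set V) :=
          ⟨hxX, by rcases hp with rfl | rfl | rfl | rfl <;> simp⟩
        rw [hAeq] at hxA
        simp only [Set.mem_insert_iff, Set.mem_singleton_iff] at hxA
        exact hnp hxA
      · exact hxX
    exact Or.inr (Or.inl ⟨hAeq, hZ0eq_gen z14 hz14X (by simp) hne_z14_y1.symm⟩)
  · -- X ∩ P = {p2, p3}
    have hAeq := hAeq_gen p2 p3 h2X h3X (by simp) (by simp) hne_p2_p3
    obtain ⟨x, hxX, hxm⟩ := dom zh23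
    rw [hzh23] at hxm
    simp only [Set.mem_union, Set.mem_diff, Set.mem_insert_iff, Set.mem_singleton_iff] at hxm
    have hz23X : z23 ∈ X := by
      rcases hxm with ⟨hp, hnp⟩ | rfl
      · exfalso
        have hxA : x ∈ X ∩ ({p1, p2, p3, p4} : Set V) :=
          ⟨hxX, by rcases hp with rfl | rfl | rfl | rfl <;> simp⟩
        rw [hAeq] at hxA
        simp only [Set.mem_insert_iff, Set.mem_singleton_iff] at hxA
        exact hnp hxA
      · exact hxX
    exact Or.inr (Or.inr (Or.inl ⟨hAeq, hZ0eq_gen z23 hz23X (by simp) hne_z23_y1.symm⟩))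
  · -- X ∩ P = {p3, p4}
    have hAeq := hAeq_gen p3 p4 h3X h4X (by simp) (by simp) hne_p3_p4
    obtain ⟨x, hxX, hxm⟩ := dom zh34
    rw [hzh34] at hxm
    simp only [Set.mem_union, Set.mem_diff, Set.mem_insert_iff, Set.mem_singleton_iff] at hxm
    have hz34X : z34 ∈ X := by
      rcases hxm with ⟨hp, hnp⟩ | rfl
      · exfalso
        have hxA : x ∈ X ∩ ({p1, p2, p3, p4} : Set V) :=
          ⟨hxX, by rcases hp with rfl | rfl | rfl | rfl <;> simp⟩
        rw [hAeq] at hxA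
        simp only [Set.mem_insert_iff, Set.mem_singleton_iff] at hxA
        exact hnp hxA
      · exact hxX
    exact Or.inr (Or.inr (Or.inr ⟨hAeq, hZ0eq_gen z34 hz34X (by simp) hne_z34_y1.symm⟩))
end
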